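/- arXiv:2202.10267 — 10 statements merged into one kernel-verified Lean document; each statement's English description precedes it below -/
import Mathlib

section
/- Let E be a finite collection of measurable sets of finite positive measure in a measure space (X, μ), and let Λ = (1/μ(sh(E))) ∑_{R∈E} μ(R) be the average height, where sh(E) = ⋃_{R∈E} R and h_E = ∑_{R∈E} 1_R. For each R ∈ E define g_R = (1_R / h_E)·1_{{h_E ≤ 2Λ}}. Then there exists at least one R ∈ E such that ∫_R g_R dμ ≥ μ(R)/(2Λ). -/
open MeasureTheory Set
open scoped ENNReal

/-!
By Markov's inequality, `h_E ≥ 2Λ` on a set of measure at most `∫ h_E / (2Λ) = μ(sh E) / 2`, so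
`{h_E ≤ 2Λ}` covers at least half of `sh E`. As `∑_R 1_R / h_E = 1_{sh E}`, the integrals
`∫_R g_R` add up to exactly the measure of that part, which is at least
`μ(sh E) / 2 = ∑_R μ(R) / (2Λ)`; hence some term `∫_R g_R` is at least `μ(R) / (2Λ)`.
-/

section Height

variable {X ι : Type*} (s : Finset ι) (E : ι → Set X)

noncomputable def height (x : X) : ℝ≥0∞ := ∑ j ∈ s, (E j).indicator 1 x

lemma height_ne_top (x : X) : height s E x ≠ ∞ :=
  ENNReal.sum_ne_top.2 fun j _ => by by_cases hx : x ∈ E j <;> simp [hx]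

lemma height_eq_zero_iff {x : X} : height s E x = 0 ↔ x ∉ ⋃ i ∈ s, E i := by
  simp [height, Finset.sum_eq_zero_iff]

lemma sum_indicator_div_height (x : X) :
    ∑ i ∈ s, (E i).indicator 1 x / height s E x = (⋃ i ∈ s, E i).indicator 1 x := by
  simp only [div_eq_mul_inv, ← Finset.sum_mul]
  by_cases hx : x ∈ ⋃ i ∈ s, E i
  · rw [indicator_of_mem hx]
    exact ENNReal.mul_inv_cancel (mt (height_eq_zero_iff s E).1 (not_not.2 hx))
      (height_ne_top s E x)
  · rw [indicator_of_notMem hx]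
    exact mul_eq_zero_of_left ((height_eq_zero_iff s E).2 hx) _

variable [MeasurableSpace X] (μ : Measure X) {s E} (hE : ∀ i ∈ s, MeasurableSet (E i))
include hE

lemma measurable_height : Measurable (height s E) :=
  Finset.measurable_sum s fun i hi => measurable_const.indicator (hE i hi)

lemma lintegral_height : ∫⁻ x, height s E x ∂μ = ∑ i ∈ s, μ (E i) := by
  simp only [height]
  rw [lintegral_finsetSum s (f := fun i => (E i).indicator 1) fun i hi =>
    measurable_const.indicator (hE i hi)]
  exact Finset.sum_congr rfl fun i hi => lintegral_indicator_one (hE i hi)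

lemma measure_biUnion_le_measure_height_le_inter_add {c : ℝ≥0∞} (hc0 : c ≠ 0) (hc : c ≠ ∞) :
    μ (⋃ i ∈ s, E i) ≤
      μ ({x | height s E x ≤ c} ∩ ⋃ i ∈ s, E i) + (∑ i ∈ s, μ (E i)) / c := by
  have hA : MeasurableSet {x | height s E x ≤ c} :=
    measurableSet_le (measurable_height hE) measurable_const
  calc μ (⋃ i ∈ s, E i)
      = μ ((⋃ i ∈ s, E i) ∩ {x | height s E x ≤ c}) +
          μ ((⋃ i ∈ s, E i) \ {x | height s E x ≤ c}) :=
        (measure_inter_add_sdiff _ hA).symm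
    _ ≤ μ ({x | height s E x ≤ c} ∩ ⋃ i ∈ s, E i) + μ {x | c ≤ height s E x} := by
        rw [inter_comm]
        gcongr
        exact fun x hx => show c ≤ height s E x from (not_le.1 hx.2).le
    _ ≤ μ ({x | height s E x ≤ c} ∩ ⋃ i ∈ s, E i) + (∑ i ∈ s, μ (E i)) / c := by
        gcongr
        rw [← lintegral_height μ hE]
        exact meas_ge_le_lintegral_div (measurable_height hE).aemeasurable hc0 hc

lemma sum_setLIntegral_indicator_div_height {A : Set X} (hA : MeasurableSet A) :
    ∑ i ∈ s, ∫⁻ x in E i, A.indicator (fun y => (E i).indicator 1 y / height s E y) x ∂μ =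
      μ (A ∩ ⋃ i ∈ s, E i) := by
  have hsupp : ∀ i, (A.indicator fun y => (E i).indicator 1 y / height s E y).support ⊆ E i :=
    fun i x hx => by_contra fun hxi => hx (by simp [hxi])
  simp_rw [setLIntegral_eq_of_support_subset (hsupp _)]
  rw [← lintegral_finsetSum' s
      (f := fun i => A.indicator fun y => (E i).indicator 1 y / height s E y) fun i hi =>
        (((measurable_const.indicator (hE i hi)).div (measurable_height hE)).indicator
          hA).aemeasurable,
    ← lintegral_indicator_one (hA.inter (s.measurableSet_biUnion hE)), ← indicator_indicator]
  refine lintegral_congr fun x => ?_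
  by_cases hx : x ∈ A
  · simp only [indicator_of_mem hx]
    exact sum_indicator_div_height s E x
  · simp [indicator_of_notMem hx]

end Height

theorem stmt0_general {X : Type*} [MeasurableSpace X] (μ : Measure X)
    {ι : Type*} (s : Finset ι) (hs : s.Nonempty) (E : ι → Set X)
    (hmeas : ∀ i ∈ s, MeasurableSet (E i))
    (hfin : ∀ i ∈ s, μ (E i) < ⊤)
    (hshpos : 0 < μ (⋃ i ∈ s, E i))
    (Λ : ℝ≥0∞) (hΛ : Λ = (∑ i ∈ s, μ (E i)) / μ (⋃ i ∈ s, E i)) (hΛfin : Λ < ⊤) :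
    ∃ i ∈ s,
      μ (E i) / (2 * Λ) ≤
        ∫⁻ x in E i,
          ({y | (∑ j ∈ s, (E j).indicator (1 : X → ℝ≥0∞) y) ≤ 2 * Λ}).indicator
            (fun y => (E i).indicator (1 : X → ℝ≥0∞) y /
              ∑ j ∈ s, (E j).indicator (1 : X → ℝ≥0∞) y) x ∂μ := by
  set sh := ⋃ i ∈ s, E i
  have hsh_le : μ sh ≤ ∑ i ∈ s, μ (E i) := measure_biUnion_finset_le s E
  have hsh_ne_top : μ sh ≠ ∞ := (hsh_le.trans_lt (ENNReal.sum_lt_top.2 hfin)).ne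
  have hsum : ∑ i ∈ s, μ (E i) = Λ * μ sh := by
    rw [hΛ, ENNReal.div_mul_cancel hshpos.ne' hsh_ne_top]
  have hΛ0 : Λ ≠ 0 := by
    rw [hΛ]
    exact (ENNReal.div_pos (hshpos.trans_le hsh_le).ne' hsh_ne_top).ne'
  have hcover := measure_biUnion_le_measure_height_le_inter_add μ hmeas (c := 2 * Λ)
    (mul_ne_zero two_ne_zero hΛ0) (ENNReal.mul_ne_top ENNReal.ofNat_ne_top hΛfin.ne)
  have hhalf : (∑ i ∈ s, μ (E i)) / (2 * Λ) = μ sh / 2 := by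
    rw [hsum, mul_comm 2 Λ, ENNReal.mul_div_mul_left _ _ hΛ0 hΛfin.ne]
  rw [hhalf] at hcover
  refine ENNReal.exists_le_of_sum_le hs ?_
  calc ∑ i ∈ s, μ (E i) / (2 * Λ) = μ sh - μ sh / 2 := by
        simp only [div_eq_mul_inv, ← Finset.sum_mul] at hhalf ⊢
        rw [hhalf, ← div_eq_mul_inv, ENNReal.sub_half hsh_ne_top]
    _ ≤ μ ({x | height s E x ≤ 2 * Λ} ∩ sh) := tsub_le_iff_right.2 hcover
    _ = _ := (sum_setLIntegral_indicator_div_height μ hmeas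
        (measurableSet_le (measurable_height hmeas) measurable_const)).symm

theorem stmt0 {X : Type*} [MeasurableSpace X] (μ : Measure X)
    {ι : Type*} (s : Finset ι) (hs : s.Nonempty) (E : ι → Set X)
    (hmeas : ∀ i ∈ s, MeasurableSet (E i))
    (hpos : ∀ i ∈ s, 0 < μ (E i)) (hfin : ∀ i ∈ s, μ (E i) < ⊤)
    (hshpos : 0 < μ (⋃ i ∈ s, E i))
    (Λ : ℝ≥0∞) (hΛ : Λ = (∑ i ∈ s, μ (E i)) / μ (⋃ i ∈ s, E i)) (hΛfin : Λ < ⊤) :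
    ∃ i ∈ s,
      μ (E i) / (2 * Λ) ≤
        ∫⁻ x in E i,
          ({y | (∑ j ∈ s, (E j).indicator (1 : X → ℝ≥0∞) y) ≤ 2 * Λ}).indicator
            (fun y => (E i).indicator (1 : X → ℝ≥0∞) y /
              ∑ j ∈ s, (E j).indicator (1 : X → ℝ≥0∞) y) x ∂μ :=
  stmt0_general μ s hs E hmeas hfin hshpos Λ hΛ hΛfin
end

section
/- Let E be a finite collection of measurable sets totally ordered by a relation ≺, and for each R ∈ E let E_{⪰R} = {S ∈ E : S ⪰ R}. Suppose there exist Λ ≥ 1 and η ∈ (0,1] such that μ({x ∈ R : h_{E_{⪰R}}(x) ≤ Λ}) ≥ η μ(R) for all R ∈ E. Then E is (η/Λ)-sparse with respect to μ; in particular ‖E‖_{Carleson(μ)} ≤ Λ η^{-1}. -/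
/-!
Put `φ_R = Λ⁻¹ · 1_{E(R)}` with `E(R) = {x ∈ R : h_{E_{⪰R}}(x) ≤ Λ}`. If `x` lies in the sets
`E(R)` for `R` in some family `T`, then every member of `T` is `⪰` the least one `R₀`, and `x`
lies in all of them, so `#T ≤ h_{E_{⪰R₀}}(x) ≤ Λ`; hence `∑ φ_R ≤ 1`, while `∫_R φ_R ≥ (η/Λ) μ(R)`
by hypothesis. Integrating `∑_{R ∈ F} φ_R ≤ 1` over `⋃ F` gives the Carleson packing bound.
-/

open MeasureTheory Set Finset
open scoped ENNReal

section

variable {X ι : Type*} {s : Finset ι} {E : ι → Set X}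

section LinearOrder

variable [LinearOrder ι]

noncomputable def upperCount (s : Finset ι) (E : ι → Set X) (i : ι) (x : X) : ℝ≥0∞ :=
  ∑ j ∈ s.filter (fun j => i ≤ j), (E j).indicator 1 x

def lowCountSet (s : Finset ι) (E : ι → Set X) (Λ : ℝ≥0∞) (i : ι) : Set X :=
  {x ∈ E i | upperCount s E i x ≤ Λ}

theorem lowCountSet_subset {Λ : ℝ≥0∞} {i : ι} : lowCountSet s E Λ i ⊆ E i :=
  sep_subset _ _

theorem sum_indicator_lowCountSet_le (Λ : ℝ≥0∞) (x : X) :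
    ∑ i ∈ s, (lowCountSet s E Λ i).indicator 1 x ≤ Λ := by
  classical
  rw [sum_indicator_eq_sum_filter]
  set T := s.filter fun i => x ∈ lowCountSet s E Λ i
  rcases T.eq_empty_or_nonempty with hT | hT
  · simp [hT]
  have hmin : T.min' hT ∈ T := min'_mem T hT
  calc ∑ i ∈ T, (1 : X → ℝ≥0∞) x = ∑ i ∈ T, (E i).indicator 1 x :=
        sum_congr rfl fun i hi => (indicator_of_mem (mem_filter.mp hi).2.1 _).symm
    _ ≤ upperCount s E (T.min' hT) x :=
        sum_le_sum_of_subset fun i hi => mem_filter.mpr ⟨(mem_filter.mp hi).1, min'_le T i hi⟩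
    _ ≤ Λ := (mem_filter.mp hmin).2.2

end LinearOrder

section Measure

variable [MeasurableSpace X] {μ : Measure X}

def IsSparse (μ : Measure X) (s : Finset ι) (E : ι → Set X) (c : ℝ≥0∞) : Prop :=
  ∃ φ : ι → X → ℝ≥0∞,
    (∀ i ∈ s, Measurable (φ i)) ∧
    (∀ i ∈ s, c * μ (E i) ≤ ∫⁻ x in E i, φ i x ∂μ) ∧
    (∀ x, ∑ i ∈ s, φ i x ≤ 1)

theorem IsSparse.mul_sum_measure_le {c : ℝ≥0∞} (h : IsSparse μ s E c) {F : Finset ι}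
    (hF : F ⊆ s) : c * ∑ i ∈ F, μ (E i) ≤ μ (⋃ i ∈ F, E i) := by
  obtain ⟨φ, hφ_meas, hφ_int, hφ_sum⟩ := h
  have hE_sub : ∀ i ∈ F, E i ⊆ ⋃ j ∈ F, E j := fun i hi => subset_biUnion_of_mem hi
  calc c * ∑ i ∈ F, μ (E i) = ∑ i ∈ F, c * μ (E i) := mul_sum _ _ _
    _ ≤ ∑ i ∈ F, ∫⁻ x in ⋃ j ∈ F, E j, φ i x ∂μ :=
        sum_le_sum fun i hi => (hφ_int i (hF hi)).trans (lintegral_mono_set (hE_sub i hi))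
    _ = ∫⁻ x in ⋃ j ∈ F, E j, ∑ i ∈ F, φ i x ∂μ :=
        (lintegral_finsetSum' F fun i hi => (hφ_meas i (hF hi)).aemeasurable).symm
    _ ≤ ∫⁻ _ in ⋃ j ∈ F, E j, 1 ∂μ :=
        lintegral_mono fun x => (sum_le_sum_of_subset hF).trans (hφ_sum x)
    _ = μ (⋃ i ∈ F, E i) := by simp

theorem IsSparse.sum_measure_le {c : ℝ≥0∞} (h : IsSparse μ s E c) (hc : c ≠ ⊤) {F : Finset ι}
    (hF : F ⊆ s) : ∑ i ∈ F, μ (E i) ≤ c⁻¹ * μ (⋃ i ∈ F, E i) := by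
  rcases eq_or_ne c 0 with rfl | hc₀
  · calc ∑ i ∈ F, μ (E i) ≤ ∑ _i ∈ F, μ (⋃ j ∈ F, E j) :=
          sum_le_sum fun i hi => measure_mono (subset_biUnion_of_mem hi)
      _ = #F * μ (⋃ j ∈ F, E j) := by rw [sum_const, nsmul_eq_mul]
      _ ≤ 0⁻¹ * μ (⋃ j ∈ F, E j) := by rw [ENNReal.inv_zero]; gcongr; exact le_top
  · exact (ENNReal.mul_le_iff_le_inv hc₀ hc).mp (h.mul_sum_measure_le hF)

section LinearOrder

variable [LinearOrder ι]

theorem measurable_upperCount (hE : ∀ i ∈ s, MeasurableSet (E i)) (i : ι) :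
    Measurable (upperCount s E i) :=
  Finset.measurable_sum _ fun j hj => measurable_one.indicator (hE j (mem_filter.mp hj).1)

theorem measurableSet_lowCountSet (hE : ∀ i ∈ s, MeasurableSet (E i)) (Λ : ℝ≥0∞) {i : ι}
    (hi : i ∈ s) : MeasurableSet (lowCountSet s E Λ i) :=
  (hE i hi).inter (measurable_upperCount hE i measurableSet_Iic)

theorem isSparse_of_measure_lowCountSet (hE : ∀ i ∈ s, MeasurableSet (E i)) {Λ η : ℝ≥0∞}
    (h : ∀ i ∈ s, η * μ (E i) ≤ μ (lowCountSet s E Λ i)) : IsSparse μ s E (η / Λ) := by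
  refine ⟨fun i x => Λ⁻¹ * (lowCountSet s E Λ i).indicator 1 x,
    fun i hi => (measurable_one.indicator (measurableSet_lowCountSet hE Λ hi)).const_mul _,
    fun i hi => ?_, fun x => ?_⟩
  · have hmeas := measurableSet_lowCountSet hE Λ hi
    rw [lintegral_const_mul _ (measurable_one.indicator hmeas), lintegral_indicator_one hmeas,
      Measure.restrict_apply hmeas, Set.inter_eq_left.mpr lowCountSet_subset,
      ENNReal.div_eq_inv_mul, mul_assoc]
    gcongr
    exact h i hi
  · rw [← mul_sum]
    calc Λ⁻¹ * ∑ i ∈ s, (lowCountSet s E Λ i).indicator 1 x ≤ Λ⁻¹ * Λ := by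
          gcongr; exact sum_indicator_lowCountSet_le Λ x
      _ ≤ 1 := ENNReal.inv_mul_le_one Λ

end LinearOrder

end Measure

end

theorem stmt3_general {X : Type*} [MeasurableSpace X] (μ : Measure X)
    {ι : Type*} [LinearOrder ι] (s : Finset ι) (E : ι → Set X)
    (hmeas : ∀ i ∈ s, MeasurableSet (E i))
    (Λ : ℝ≥0∞) (hΛ : 1 ≤ Λ) (η : ℝ≥0∞) (hη1 : η ≤ 1)
    (hsel : ∀ i ∈ s, η * μ (E i) ≤
      μ {x ∈ E i |
          (∑ j ∈ s.filter (fun j => i ≤ j), (E j).indicator (1 : X → ℝ≥0∞) x) ≤ Λ}) :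
    (∃ φ : ι → X → ℝ≥0∞,
      (∀ i ∈ s, Measurable (φ i)) ∧
      (∀ i ∈ s, (η / Λ) * μ (E i) ≤ ∫⁻ x in E i, φ i x ∂μ) ∧
      (∀ x, ∑ i ∈ s, φ i x ≤ 1)) ∧
    ∀ F ⊆ s, ∑ i ∈ F, μ (E i) ≤ (Λ / η) * μ (⋃ i ∈ F, E i) := by
  have hΛ₀ : Λ ≠ 0 := (zero_lt_one.trans_le hΛ).ne'
  have hη_top : η ≠ ⊤ := ne_top_of_le_ne_top ENNReal.one_ne_top hη1
  have hsparse : IsSparse μ s E (η / Λ) := isSparse_of_measure_lowCountSet hmeas hsel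
  refine ⟨hsparse, fun F hF => ?_⟩
  rw [← ENNReal.inv_div (Or.inr hη_top) (Or.inl hΛ₀)]
  exact hsparse.sum_measure_le (ENNReal.div_ne_top hη_top hΛ₀) hF

theorem stmt3 {X : Type*} [MeasurableSpace X] (μ : Measure X)
    {ι : Type*} [LinearOrder ι] (s : Finset ι) (E : ι → Set X)
    (hmeas : ∀ i ∈ s, MeasurableSet (E i))
    (hfin : ∀ i ∈ s, μ (E i) < ⊤)
    (Λ : ℝ≥0∞) (hΛ : 1 ≤ Λ) (η : ℝ≥0∞) (hη0 : 0 < η) (hη1 : η ≤ 1)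
    (hsel : ∀ i ∈ s, η * μ (E i) ≤
      μ {x ∈ E i |
          (∑ j ∈ s.filter (fun j => i ≤ j), (E j).indicator (1 : X → ℝ≥0∞) x) ≤ Λ}) :
    (∃ φ : ι → X → ℝ≥0∞,
      (∀ i ∈ s, Measurable (φ i)) ∧
      (∀ i ∈ s, (η / Λ) * μ (E i) ≤ ∫⁻ x in E i, φ i x ∂μ) ∧
      (∀ x, ∑ i ∈ s, φ i x ≤ 1)) ∧
    ∀ F ⊆ s, ∑ i ∈ F, μ (E i) ≤ (Λ / η) * μ (⋃ i ∈ F, E i) :=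
  stmt3_general μ s E hmeas Λ hΛ η hη1 hsel
end

section
/- Let E be a finite collection of measurable sets and suppose the associated maximal operator M_E satisfies the restricted weak-type bound μ({M_E(1_B) > η}) ≤ M μ(B) for all measurable B, for some η ∈ (0,1) and M < ∞. Suppose also that sup_{λ>0} λ μ({h_E > λ}) ≤ Λ μ(sh(E)), with 0 < μ(sh(E)) < ∞. Then there exists at least one R ∈ E with μ({x ∈ R : h_E(x) ≤ 2ΛM}) ≥ (1−η) μ(R). -/
open MeasureTheory Set
open scoped ENNReal

/-!
If the conclusion fails, put `B = {h_E > 2ΛM}`. Then every `R ∈ E` has more than an `η`-fraction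
of its mass in `B`, so `sh(E) ⊆ {M_E 1_B > η}` and `μ(sh(E)) ≤ M μ(B)`. As `B ⊆ sh(E)`, the
weak-type bound at level `2ΛM` gives `2ΛM μ(B) ≤ Λ μ(sh(E)) ≤ ΛM μ(B)`, which is absurd since
`0 < μ(B) < ∞`.
-/

section

variable {X : Type*} {ι : Type*} {s : Finset ι} {E : ι → Set X}

theorem ENNReal.eq_zero_or_eq_top_of_two_mul_le_self {a : ℝ≥0∞} (h : 2 * a ≤ a) :
    a = 0 ∨ a = ⊤ := by
  by_contra! ha
  exact (ENNReal.lt_add_right ha.2 ha.1).not_ge (two_mul a ▸ h)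

theorem biUnion_subset_setOf_lt_iSup_indicator {α : Type*} [CompleteLattice α] [Zero α]
    {f : ι → α} {η : α} (h : ∀ i ∈ s, η < f i) :
    ⋃ i ∈ s, E i ⊆ {x | η < ⨆ i ∈ s, (E i).indicator (fun _ => f i) x} := by
  simp only [subset_def, mem_iUnion, exists_prop, forall_exists_index, and_imp]
  intro x i hi hx
  calc η < f i := h i hi
    _ = (E i).indicator (fun _ => f i) x := (indicator_of_mem hx (fun _ => f i)).symm
    _ ≤ ⨆ i ∈ s, (E i).indicator (fun _ => f i) x := le_iSup₂_of_le i hi le_rfl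

theorem one_le_sum_indicator_one {x : X} {i : ι} (hi : i ∈ s) (hx : x ∈ E i) :
    1 ≤ ∑ j ∈ s, (E j).indicator (1 : X → ℝ≥0∞) x := by
  simpa [indicator_of_mem hx] using
    Finset.single_le_sum (f := fun j => (E j).indicator (1 : X → ℝ≥0∞) x) (by simp) hi

theorem mem_biUnion_of_sum_indicator_one_ne_zero {x : X}
    (hx : ∑ j ∈ s, (E j).indicator (1 : X → ℝ≥0∞) x ≠ 0) : x ∈ ⋃ i ∈ s, E i := by
  contrapose! hx
  simp only [mem_iUnion, exists_prop, not_exists, not_and] at hx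
  exact Finset.sum_eq_zero fun j hj => indicator_of_notMem (hx j hj) _

variable [MeasurableSpace X] {μ : Measure X}

theorem mul_measure_lt_measure_inter_of_measure_sdiff_lt {R B : Set X} {η : ℝ≥0∞}
    (hR : μ R ≠ ⊤) (hη : η ≤ 1) (h : μ (R \ B) < (1 - η) * μ R) :
    η * μ R < μ (B ∩ R) := by
  have hsplit : μ R < μ (B ∩ R) + (1 - η) * μ R := calc
    μ R ≤ μ (R ∩ B) + μ (R \ B) := measure_le_inter_add_sdiff μ R B
    _ < μ (B ∩ R) + (1 - η) * μ R := by
      rw [inter_comm]; exact ENNReal.add_lt_add_left (measure_ne_top_of_subset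
        inter_subset_right hR) h
  have hη_eq : η * μ R = μ R - (1 - η) * μ R := calc
    η * μ R = (1 - (1 - η)) * μ R := by rw [ENNReal.sub_sub_cancel ENNReal.one_ne_top hη]
    _ = μ R - (1 - η) * μ R := by rw [ENNReal.sub_mul fun _ _ => hR, one_mul]
  rw [hη_eq]
  exact ENNReal.sub_lt_of_lt_add (mul_le_of_le_one_left' tsub_le_self) hsplit

theorem measure_biUnion_le_of_measure_sdiff_lt {B : Set X} {η M : ℝ≥0∞}
    (hpos : ∀ i ∈ s, 0 < μ (E i)) (hfin : ∀ i ∈ s, μ (E i) < ⊤) (hη : η ≤ 1)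
    (hmaxB : μ {x | η < ⨆ i ∈ s, (E i).indicator (fun _ => μ (B ∩ E i) / μ (E i)) x} ≤ M * μ B)
    (h : ∀ i ∈ s, μ (E i \ B) < (1 - η) * μ (E i)) :
    μ (⋃ i ∈ s, E i) ≤ M * μ B := by
  refine (measure_mono (biUnion_subset_setOf_lt_iSup_indicator fun i hi => ?_)).trans hmaxB
  exact (ENNReal.lt_div_iff_mul_lt (.inl (hpos i hi).ne') (.inl (hfin i hi).ne)).mpr <|
    mul_measure_lt_measure_inter_of_measure_sdiff_lt (hfin i hi).ne hη (h i hi)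

theorem le_mul_of_mul_measure_setOf_lt_le {h : X → ℝ≥0∞} {B S : Set X} {lam Λ M : ℝ≥0∞}
    (hB : B ⊆ {x | lam < h x}) (hB0 : μ B ≠ 0) (hBtop : μ B ≠ ⊤)
    (hweak : lam * μ {x | lam < h x} ≤ Λ * μ S) (hS : μ S ≤ M * μ B) :
    lam ≤ Λ * M := by
  refine (ENNReal.mul_le_mul_iff_left hB0 hBtop).mp ?_
  calc lam * μ B ≤ lam * μ {x | lam < h x} := by gcongr
    _ ≤ Λ * μ S := hweak
    _ ≤ Λ * (M * μ B) := by gcongr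
    _ = Λ * M * μ B := (mul_assoc _ _ _).symm

end

theorem stmt5_general {X : Type*} [MeasurableSpace X] (μ : Measure X)
    {ι : Type*} (s : Finset ι) (E : ι → Set X)
    (hmeas : ∀ i ∈ s, MeasurableSet (E i))
    (hpos : ∀ i ∈ s, 0 < μ (E i)) (hfin : ∀ i ∈ s, μ (E i) < ⊤)
    (hshpos : 0 < μ (⋃ i ∈ s, E i)) (hshfin : μ (⋃ i ∈ s, E i) < ⊤)
    (η M : ℝ≥0∞) (hη1 : η < 1)
    (hmax : ∀ B : Set X, MeasurableSet B →
      μ {x | η < ⨆ i ∈ s, (E i).indicator (fun _ => μ (B ∩ E i) / μ (E i)) x} ≤ M * μ B)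
    (Λ : ℝ≥0∞)
    (hwt : ∀ lam : ℝ≥0∞, 0 < lam →
      lam * μ {x | lam < ∑ i ∈ s, (E i).indicator (1 : X → ℝ≥0∞) x} ≤
        Λ * μ (⋃ i ∈ s, E i)) :
    ∃ i ∈ s, (1 - η) * μ (E i) ≤
      μ {x ∈ E i | (∑ j ∈ s, (E j).indicator (1 : X → ℝ≥0∞) x) ≤ 2 * Λ * M} := by
  by_contra! hcon
  set h : X → ℝ≥0∞ := fun x => ∑ j ∈ s, (E j).indicator (1 : X → ℝ≥0∞) x
  set B := {x | 2 * Λ * M < h x}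
  have hBmeas : MeasurableSet B := measurableSet_lt measurable_const <|
    Finset.measurable_sum s fun j hj => measurable_const.indicator (hmeas j hj)
  have hshB : μ (⋃ i ∈ s, E i) ≤ M * μ B :=
    measure_biUnion_le_of_measure_sdiff_lt hpos hfin hη1.le (hmax B hBmeas) fun i hi => by
      convert hcon i hi using 2; ext x; simp [B, h]
  have hB0 : μ B ≠ 0 := fun h0 => hshpos.ne' (by simpa [h0] using hshB)
  have hBsh : B ⊆ ⋃ i ∈ s, E i := fun x hx =>
    mem_biUnion_of_sum_indicator_one_ne_zero (ne_bot_of_gt hx)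
  -- `hwt` needs a positive level; as `h` is integer valued, `B` also lies above level `1/2`.
  set lam := max (2 * Λ * M) (1 / 2)
  have hBlam : B ⊆ {x | lam < h x} := fun x hx => by
    obtain ⟨i, hi, hxi⟩ := mem_iUnion₂.mp (hBsh hx)
    exact max_lt hx ((by norm_num : (1 / 2 : ℝ≥0∞) < 1).trans_le (one_le_sum_indicator_one hi hxi))
  have hlam : lam ≤ Λ * M :=
    le_mul_of_mul_measure_setOf_lt_le hBlam hB0 (measure_ne_top_of_subset hBsh hshfin.ne)
      (hwt lam (lt_max_of_lt_right (by norm_num))) hshB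
  rcases ENNReal.eq_zero_or_eq_top_of_two_mul_le_self
    (mul_assoc 2 Λ M ▸ (le_max_left _ _).trans hlam) with hΛM | hΛM
  · have : (1 / 2 : ℝ≥0∞) ≤ 0 := hΛM ▸ (le_max_right _ _).trans hlam
    norm_num at this
  · refine hB0 (measure_mono_null (fun x hx => ?_) measure_empty)
    simp [B, mul_assoc, hΛM] at hx

theorem stmt5 {X : Type*} [MeasurableSpace X] (μ : Measure X)
    {ι : Type*} (s : Finset ι) (hs : s.Nonempty) (E : ι → Set X)
    (hmeas : ∀ i ∈ s, MeasurableSet (E i))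
    (hpos : ∀ i ∈ s, 0 < μ (E i)) (hfin : ∀ i ∈ s, μ (E i) < ⊤)
    (hshpos : 0 < μ (⋃ i ∈ s, E i)) (hshfin : μ (⋃ i ∈ s, E i) < ⊤)
    (η M : ℝ≥0∞) (hη0 : 0 < η) (hη1 : η < 1) (hMfin : M < ⊤)
    (hmax : ∀ B : Set X, MeasurableSet B →
      μ {x | η < ⨆ i ∈ s, (E i).indicator (fun _ => μ (B ∩ E i) / μ (E i)) x} ≤ M * μ B)
    (Λ : ℝ≥0∞)
    (hwt : ∀ lam : ℝ≥0∞, 0 < lam →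
      lam * μ {x | lam < ∑ i ∈ s, (E i).indicator (1 : X → ℝ≥0∞) x} ≤
        Λ * μ (⋃ i ∈ s, E i)) :
    ∃ i ∈ s, (1 - η) * μ (E i) ≤
      μ {x ∈ E i | (∑ j ∈ s, (E j).indicator (1 : X → ℝ≥0∞) x) ≤ 2 * Λ * M} :=
  stmt5_general μ s E hmeas hpos hfin hshpos hshfin η M hη1 hmax Λ hwt
end

section
/- Let E be a finite collection of measurable sets such that the maximal operator M_E satisfies μ({M_E(1_B) > η}) ≤ M μ(B) for all measurable B (with η ∈ (0,1), M < ∞), and suppose that for every subcollection F ⊆ E one has the weak-type bound ‖h_F‖_{L^{1,∞}(μ)} ≤ C₀ μ(sh(F)). Then ‖E‖_{Carleson(μ)} ≤ 2(1−η)^{-1} M C₀. -/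
/-!
Fix `λ > M C₀` (in the end `λ = 2 M C₀`), let `h_G = ∑_{i ∈ G} 1_{E i}` and `B = {h_G > λ}`.
If every `E i`, `i ∈ G`, met `B` in relative measure `> η`, then `sh G ⊆ {M_E 1_B > η}`, and the
two hypotheses would give `λ μ(sh G) ≤ λ M μ(B) ≤ M C₀ μ(sh G) < λ μ(sh G)`. So the indices `i`
of low density form a nonempty part of `G`, and each of them has
`(1 - η) μ(E i) ≤ μ(E i \ B)`. Removing them and inducting on `G` gives
`(1 - η) ∑_{i ∈ G} μ(E i) ≤ ∫ min(h_G, λ) dμ ≤ λ μ(sh G)`: off `B` the removed sets contribute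
at most `h_G ≤ λ`, while on `B` the truncation is already `λ`. Testing the hypotheses on a single
set shows `M ≥ 1` and `C₀ > 0`, so `2 M C₀ > M C₀` unless `C₀ = ∞`.
-/

open MeasureTheory Set
open scoped ENNReal

section

variable {X ι : Type*} {E : ι → Set X}

noncomputable def overlapCount (E : ι → Set X) (G : Finset ι) (x : X) : ℝ≥0∞ :=
  ∑ i ∈ G, (E i).indicator 1 x

theorem overlapCount_sdiff_add [DecidableEq ι] {G G' : Finset ι} (h : G' ⊆ G) (x : X) :
    overlapCount E (G \ G') x + overlapCount E G' x = overlapCount E G x :=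
  Finset.sum_sdiff h

theorem min_overlapCount_le_indicator (G : Finset ι) (lam : ℝ≥0∞) (x : X) :
    min (overlapCount E G x) lam ≤ (⋃ i ∈ G, E i).indicator (fun _ => lam) x := by
  by_cases hx : x ∈ ⋃ i ∈ G, E i
  · rw [indicator_of_mem hx]
    exact min_le_right _ _
  · have hzero : overlapCount E G x = 0 := Finset.sum_eq_zero fun i hi =>
      indicator_of_notMem (fun hxi => hx (Finset.subset_set_biUnion_of_mem hi hxi)) _
    simp [hzero]

theorem indicator_overlapCount_sdiff_add_min_le [DecidableEq ι] {G G' : Finset ι} (h : G' ⊆ G)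
    (lam : ℝ≥0∞) (x : X) :
    {y | lam < overlapCount E G y}ᶜ.indicator (overlapCount E (G \ G')) x
      + min (overlapCount E G' x) lam ≤ min (overlapCount E G x) lam := by
  by_cases hx : lam < overlapCount E G x
  · rw [indicator_of_notMem (not_not.2 hx), zero_add, min_eq_right hx.le]
    exact min_le_right _ _
  · rw [indicator_of_mem hx, min_eq_left (not_lt.1 hx), ← overlapCount_sdiff_add h x]
    gcongr
    exact min_le_left _ _

variable [MeasurableSpace X] {μ : Measure X}

noncomputable def maximalFn (μ : Measure X) (s : Finset ι) (E : ι → Set X) (B : Set X)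
    (x : X) : ℝ≥0∞ :=
  ⨆ i ∈ s, (E i).indicator (fun _ => μ (B ∩ E i) / μ (E i)) x

noncomputable def highDensity (μ : Measure X) (E : ι → Set X) (B : Set X) (η : ℝ≥0∞)
    (G : Finset ι) : Finset ι :=
  G.filter fun i => η < μ (B ∩ E i) / μ (E i)

theorem measurable_overlapCount {G : Finset ι} (hE : ∀ i ∈ G, MeasurableSet (E i)) :
    Measurable (overlapCount E G) :=
  Finset.measurable_sum G fun i hi => measurable_one.indicator (hE i hi)

theorem lintegral_min_overlapCount_le {G : Finset ι} (hE : ∀ i ∈ G, MeasurableSet (E i))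
    (lam : ℝ≥0∞) : ∫⁻ x, min (overlapCount E G x) lam ∂μ ≤ lam * μ (⋃ i ∈ G, E i) :=
  (lintegral_mono (min_overlapCount_le_indicator G lam)).trans_eq
    (lintegral_indicator_const (G.measurableSet_biUnion hE) lam)

theorem lintegral_indicator_overlapCount {G : Finset ι} {B : Set X}
    (hE : ∀ i ∈ G, MeasurableSet (E i)) (hB : MeasurableSet B) :
    ∫⁻ x, B.indicator (overlapCount E G) x ∂μ = ∑ i ∈ G, μ (E i ∩ B) := by
  simp only [lintegral_indicator hB, overlapCount]
  rw [lintegral_finsetSum _ fun i hi => measurable_one.indicator (hE i hi)]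
  refine Finset.sum_congr rfl fun i hi => ?_
  rw [lintegral_indicator_one (hE i hi), Measure.restrict_apply (hE i hi)]

theorem le_maximalFn {s : Finset ι} {B : Set X} {i : ι} (hi : i ∈ s) {x : X} (hx : x ∈ E i) :
    μ (B ∩ E i) / μ (E i) ≤ maximalFn μ s E B x := by
  have h := le_iSup₂ (f := fun j (_ : j ∈ s) =>
    (E j).indicator (fun _ => μ (B ∩ E j) / μ (E j)) x) i hi
  rwa [indicator_of_mem hx] at h

theorem one_le_of_measure_maximalFn_le {s : Finset ι} {i : ι} {η M : ℝ≥0∞} (hη : η < 1)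
    (hi : i ∈ s) (h0 : μ (E i) ≠ 0) (htop : μ (E i) ≠ ⊤)
    (hmax : μ {x | η < maximalFn μ s E (E i) x} ≤ M * μ (E i)) : 1 ≤ M := by
  have hsub : E i ⊆ {x | η < maximalFn μ s E (E i) x} := fun x hx =>
    hη.trans_le (by simpa [ENNReal.div_self h0 htop] using le_maximalFn (μ := μ) (B := E i) hi hx)
  rw [← ENNReal.mul_le_mul_iff_left h0 htop, one_mul]
  exact (measure_mono hsub).trans hmax

theorem le_of_weak_bound_singleton {i : ι} {lam C₀ : ℝ≥0∞} (hlam : lam < 1)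
    (h0 : μ (E i) ≠ 0) (htop : μ (E i) ≠ ⊤)
    (hwt : lam * μ {x | lam < overlapCount E {i} x} ≤ C₀ * μ (⋃ j ∈ ({i} : Finset ι), E j)) :
    lam ≤ C₀ := by
  have hsub : E i ⊆ {x | lam < overlapCount E {i} x} := fun x hx => by
    simpa [overlapCount, indicator_of_mem hx] using hlam
  rw [Finset.set_biUnion_singleton] at hwt
  rw [← ENNReal.mul_le_mul_iff_left h0 htop]
  exact (mul_le_mul_right (measure_mono hsub) lam).trans hwt

theorem sub_mul_measure_le_measure_diff {A B : Set X} {η : ℝ≥0∞} (hA : μ A ≠ ⊤)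
    (h : μ (A ∩ B) ≤ η * μ A) : (1 - η) * μ A ≤ μ (A \ B) := by
  rw [ENNReal.sub_mul fun _ _ => hA, one_mul, tsub_le_iff_right]
  exact (measure_le_inter_add_sdiff μ A B).trans (by rw [add_comm]; gcongr)

theorem highDensity_ssubset {s G : Finset ι} {B : Set X} {η M C₀ lam : ℝ≥0∞} (hGs : G ⊆ s)
    (hsh0 : μ (⋃ i ∈ G, E i) ≠ 0) (hshtop : μ (⋃ i ∈ G, E i) ≠ ⊤)
    (hmax : μ {x | η < maximalFn μ s E B x} ≤ M * μ B)
    (hwt : lam * μ B ≤ C₀ * μ (⋃ i ∈ G, E i)) (hlam : M * C₀ < lam) :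
    highDensity μ E B η G ⊂ G := by
  refine (Finset.filter_subset _ _).ssubset_of_ne fun heq => hlam.not_ge ?_
  have hsub : (⋃ i ∈ G, E i) ⊆ {x | η < maximalFn μ s E B x} := by
    refine iUnion₂_subset fun i hi x hx => ?_
    exact (Finset.mem_filter.1 (heq.ge hi)).2.trans_le (le_maximalFn (hGs hi) hx)
  rw [← ENNReal.mul_le_mul_iff_left hsh0 hshtop]
  calc lam * μ (⋃ i ∈ G, E i) ≤ lam * (M * μ B) := by
        gcongr; exact (measure_mono hsub).trans hmax
    _ = M * (lam * μ B) := by ring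
    _ ≤ M * (C₀ * μ (⋃ i ∈ G, E i)) := by gcongr
    _ = M * C₀ * μ (⋃ i ∈ G, E i) := by ring

theorem sub_mul_sum_measure_le_lintegral_min {s : Finset ι} {η M C₀ lam : ℝ≥0∞}
    (hmeas : ∀ i ∈ s, MeasurableSet (E i))
    (hpos : ∀ i ∈ s, 0 < μ (E i)) (hfin : ∀ i ∈ s, μ (E i) < ⊤)
    (hmax : ∀ B : Set X, MeasurableSet B → μ {x | η < maximalFn μ s E B x} ≤ M * μ B)
    (hwt : ∀ G ⊆ s, lam * μ {x | lam < overlapCount E G x} ≤ C₀ * μ (⋃ i ∈ G, E i))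
    (hlam : M * C₀ < lam) {G : Finset ι} (hG : G ⊆ s) :
    (1 - η) * ∑ i ∈ G, μ (E i) ≤ ∫⁻ x, min (overlapCount E G x) lam ∂μ := by
  classical
  induction G using Finset.strongInduction with
  | H G ih =>
  rcases G.eq_empty_or_nonempty with rfl | ⟨j, hj⟩
  · simp
  have hGmeas : ∀ i ∈ G, MeasurableSet (E i) := fun i hi => hmeas i (hG hi)
  set B := {x | lam < overlapCount E G x}
  have hB : MeasurableSet B := measurableSet_lt measurable_const (measurable_overlapCount hGmeas)
  set G' := highDensity μ E B η G
  have hG' : G' ⊂ G := highDensity_ssubset hG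
    (((hpos j (hG hj)).trans_le (measure_mono (Finset.subset_set_biUnion_of_mem hj))).ne')
    (measure_biUnion_lt_top G.finite_toSet fun i hi => hfin i (hG hi)).ne
    (hmax B hB) (hwt G hG) hlam
  have hlow : ∀ i ∈ G \ G', (1 - η) * μ (E i) ≤ μ (E i ∩ Bᶜ) := fun i hi => by
    obtain ⟨hiG, hiG'⟩ := Finset.mem_sdiff.1 hi
    have hsparse : μ (B ∩ E i) / μ (E i) ≤ η :=
      not_lt.1 fun h => hiG' (Finset.mem_filter.2 ⟨hiG, h⟩)
    rw [ENNReal.div_le_iff_le_mul (Or.inl (hpos i (hG hiG)).ne') (Or.inl (hfin i (hG hiG)).ne),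
      inter_comm] at hsparse
    exact sub_mul_measure_le_measure_diff (hfin i (hG hiG)).ne hsparse
  calc (1 - η) * ∑ i ∈ G, μ (E i)
      = ∑ i ∈ G \ G', (1 - η) * μ (E i) + (1 - η) * ∑ i ∈ G', μ (E i) := by
        rw [← Finset.sum_sdiff hG'.subset, mul_add, Finset.mul_sum]
    _ ≤ ∑ i ∈ G \ G', μ (E i ∩ Bᶜ) + ∫⁻ x, min (overlapCount E G' x) lam ∂μ :=
        add_le_add (Finset.sum_le_sum hlow) (ih G' hG' (hG'.subset.trans hG))
    _ = ∫⁻ x, Bᶜ.indicator (overlapCount E (G \ G')) x + min (overlapCount E G' x) lam ∂μ := by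
        rw [lintegral_add_left ((measurable_overlapCount fun i hi =>
            hGmeas i (Finset.sdiff_subset hi)).indicator hB.compl),
          lintegral_indicator_overlapCount (fun i hi => hGmeas i (Finset.sdiff_subset hi)) hB.compl]
    _ ≤ ∫⁻ x, min (overlapCount E G x) lam ∂μ :=
        lintegral_mono (indicator_overlapCount_sdiff_add_min_le hG'.subset lam)

theorem sum_measure_le_of_mul_lt {s F : Finset ι} {η M C₀ lam : ℝ≥0∞} (hη : η < 1)
    (hmeas : ∀ i ∈ s, MeasurableSet (E i))
    (hpos : ∀ i ∈ s, 0 < μ (E i)) (hfin : ∀ i ∈ s, μ (E i) < ⊤)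
    (hmax : ∀ B : Set X, MeasurableSet B → μ {x | η < maximalFn μ s E B x} ≤ M * μ B)
    (hwt : ∀ G ⊆ s, lam * μ {x | lam < overlapCount E G x} ≤ C₀ * μ (⋃ i ∈ G, E i))
    (hlam : M * C₀ < lam) (hF : F ⊆ s) :
    ∑ i ∈ F, μ (E i) ≤ (1 - η)⁻¹ * lam * μ (⋃ i ∈ F, E i) := by
  have h := (sub_mul_sum_measure_le_lintegral_min hmeas hpos hfin hmax hwt hlam hF).trans
    (lintegral_min_overlapCount_le (fun i hi => hmeas i (hF hi)) lam)
  rw [mul_assoc, ← ENNReal.div_eq_inv_mul,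
    ENNReal.le_div_iff_mul_le (Or.inl (tsub_pos_of_lt hη).ne')
      (Or.inl (ENNReal.sub_ne_top ENNReal.one_ne_top)), mul_comm]
  exact h

end

theorem stmt6_general {X : Type*} [MeasurableSpace X] (μ : Measure X)
    {ι : Type*} (s : Finset ι) (E : ι → Set X)
    (hmeas : ∀ i ∈ s, MeasurableSet (E i))
    (hpos : ∀ i ∈ s, 0 < μ (E i)) (hfin : ∀ i ∈ s, μ (E i) < ⊤)
    (η M C₀ : ℝ≥0∞) (hη1 : η < 1) (hMfin : M < ⊤)
    (hmax : ∀ B : Set X, MeasurableSet B →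
      μ {x | η < ⨆ i ∈ s, (E i).indicator (fun _ => μ (B ∩ E i) / μ (E i)) x} ≤ M * μ B)
    (hwt : ∀ F ⊆ s, ∀ lam : ℝ≥0∞, 0 < lam →
      lam * μ {x | lam < ∑ i ∈ F, (E i).indicator (1 : X → ℝ≥0∞) x} ≤
        C₀ * μ (⋃ i ∈ F, E i)) :
    ∀ F ⊆ s, ∑ i ∈ F, μ (E i) ≤ 2 * (1 - η)⁻¹ * M * C₀ * μ (⋃ i ∈ F, E i) := by
  intro F hF
  rcases F.eq_empty_or_nonempty with rfl | ⟨i, hi⟩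
  · simp
  have h0 := (hpos i (hF hi)).ne'
  have htop := (hfin i (hF hi)).ne
  have hM : M ≠ 0 := (one_pos.trans_le
    (one_le_of_measure_maximalFn_le hη1 (hF hi) h0 htop (hmax _ (hmeas i (hF hi))))).ne'
  have hC₀ : C₀ ≠ 0 := ((ENNReal.inv_pos.2 ENNReal.ofNat_ne_top).trans_le
    (le_of_weak_bound_singleton ENNReal.one_half_lt_one h0 htop
      (hwt {i} (by simpa using hF hi) _ (ENNReal.inv_pos.2 ENNReal.ofNat_ne_top)))).ne'
  have hsh : μ (⋃ i ∈ F, E i) ≠ 0 :=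
    (h0.bot_lt.trans_le (measure_mono (Finset.subset_set_biUnion_of_mem hi))).ne'
  rcases eq_or_ne C₀ ⊤ with rfl | hC₀top
  · simp [hM, hsh]
  have hlam : M * C₀ < 2 * M * C₀ := by
    rw [mul_assoc, two_mul]
    exact ENNReal.lt_add_right (ENNReal.mul_ne_top hMfin.ne hC₀top) (mul_ne_zero hM hC₀)
  calc ∑ i ∈ F, μ (E i) ≤ (1 - η)⁻¹ * (2 * M * C₀) * μ (⋃ i ∈ F, E i) :=
        sum_measure_le_of_mul_lt hη1 hmeas hpos hfin hmax
          (fun G hG => hwt G hG _ (pos_of_gt hlam)) hlam hF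
    _ = 2 * (1 - η)⁻¹ * M * C₀ * μ (⋃ i ∈ F, E i) := by ring

theorem stmt6 {X : Type*} [MeasurableSpace X] (μ : Measure X)
    {ι : Type*} (s : Finset ι) (E : ι → Set X)
    (hmeas : ∀ i ∈ s, MeasurableSet (E i))
    (hpos : ∀ i ∈ s, 0 < μ (E i)) (hfin : ∀ i ∈ s, μ (E i) < ⊤)
    (η M C₀ : ℝ≥0∞) (hη0 : 0 < η) (hη1 : η < 1) (hMfin : M < ⊤)
    (hmax : ∀ B : Set X, MeasurableSet B →
      μ {x | η < ⨆ i ∈ s, (E i).indicator (fun _ => μ (B ∩ E i) / μ (E i)) x} ≤ M * μ B)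
    (hwt : ∀ F ⊆ s, ∀ lam : ℝ≥0∞, 0 < lam →
      lam * μ {x | lam < ∑ i ∈ F, (E i).indicator (1 : X → ℝ≥0∞) x} ≤
        C₀ * μ (⋃ i ∈ F, E i)) :
    ∀ F ⊆ s, ∑ i ∈ F, μ (E i) ≤ 2 * (1 - η)⁻¹ * M * C₀ * μ (⋃ i ∈ F, E i) :=
  stmt6_general μ s E hmeas hpos hfin η M C₀ hη1 hMfin hmax hwt
end

section
/- Let E be a finite collection of measurable sets, totally ordered by <, such that μ({x ∈ R : h_{E_{≤R}}(x) > K}) ≤ η μ(R) for all R ∈ E, where η ∈ (0,1). Then for any γ with 0 < γ < 1−η and any integer N ≥ K(1−η)/(1−η−γ), the collection E can be partitioned into N subcollections E_1, …, E_N such that for each i and each R ∈ E_i, μ(R ∩ sh({S ∈ E_i : S < R})) ≤ (1−γ) μ(R). -/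
/-!
Colour greedily in increasing order. When the largest set `E a` arrives, let `S` be the set of
points covered more than `K` times by `E a` and the earlier sets, so `μ (E a ∩ S) ≤ η μ (E a)`.
Summed over the `N` colours, the overlap of `E a` with the colour classes is at most
`N μ (E a ∩ S) + K μ (E a \ S)`, since off `S` a point lies in at most `K` earlier sets. The
choice of `N` makes this at most `N (1 - γ) μ (E a)`, so some colour class overlaps `E a` in
measure at most `(1 - γ) μ (E a)`; give `E a` that colour.
-/

open MeasureTheory Set Finset
open scoped ENNReal

namespace ENNReal

lemma mul_add_mul_le_of_le_mul {K η γ N a b : ℝ≥0∞} (hη : η < 1) (hγ : γ < 1 - η)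
    (hN : K * (1 - η) / (1 - η - γ) ≤ N) (ha : a ≤ η * (a + b)) :
    N * a + K * b ≤ N * (1 - γ) * (a + b) := by
  have hgap : K * (1 - η) ≤ N * (1 - η - γ) := by
    rwa [ENNReal.div_le_iff (tsub_pos_of_lt hγ).ne'
      (ne_top_of_le_ne_top one_ne_top (tsub_le_self.trans tsub_le_self))] at hN
  have hKN : K ≤ N := by
    refine (ENNReal.mul_le_mul_iff_left (tsub_pos_of_lt hη).ne'
      (ne_top_of_le_ne_top one_ne_top tsub_le_self)).mp (hgap.trans ?_)
    exact mul_le_mul_right tsub_le_self N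
  have hN_split : N = (N - K) + K := (tsub_add_cancel_of_le hKN).symm
  calc N * a + K * b = (N - K) * a + K * (a + b) := by
        conv_lhs => rw [hN_split]
        ring
    _ ≤ (N - K) * (η * (a + b)) + K * (a + b) := by gcongr
    _ = ((N - K + K) * η + K * (1 - η)) * (a + b) := by
      rw [add_mul _ K, add_assoc, ← mul_add K, add_tsub_cancel_of_le hη.le]
      ring
    _ ≤ (N * η + N * (1 - η - γ)) * (a + b) := by rw [← hN_split]; gcongr
    _ = N * (1 - γ) * (a + b) := by
      have hηγ : η ≤ 1 - γ := ENNReal.le_sub_of_add_le_left (hγ.trans_le tsub_le_self).ne_top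
        (add_le_of_le_tsub_right_of_le hη.le hγ.le)
      rw [← mul_add, tsub_right_comm, add_tsub_cancel_of_le hηγ]

end ENNReal

section

variable {X : Type*} [MeasurableSpace X] {μ : Measure X} {ι : Type*}

lemma sum_measure_inter_le_mul_of_sum_indicator_le {t : Finset ι} {E : ι → Set X}
    (hE : ∀ j ∈ t, MeasurableSet (E j)) {B : Set X} {K : ℝ≥0∞}
    (hK : ∀ x ∈ B, ∑ j ∈ t, (E j).indicator 1 x ≤ K) :
    ∑ j ∈ t, μ (B ∩ E j) ≤ K * μ B := calc
  ∑ j ∈ t, μ (B ∩ E j) = ∫⁻ x in B, ∑ j ∈ t, (E j).indicator 1 x ∂μ := by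
    rw [lintegral_finsetSum _ fun j hj => measurable_one.indicator (hE j hj)]
    refine sum_congr rfl fun j hj => ?_
    rw [lintegral_indicator_one (hE j hj), Measure.restrict_apply (hE j hj), inter_comm]
  _ ≤ ∫⁻ _ in B, K ∂μ := setLIntegral_mono measurable_const hK
  _ = K * μ B := setLIntegral_const B K

lemma sum_measure_inter_biUnion_fiber_le {κ : Type*} [Fintype κ] [DecidableEq κ] (f : ι → κ)
    (t : Finset ι) (E : ι → Set X) (B : Set X) :
    ∑ c, μ (B ∩ ⋃ j ∈ t.filter (f · = c), E j) ≤ ∑ j ∈ t, μ (B ∩ E j) := calc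
  _ ≤ ∑ c, ∑ j ∈ t.filter (f · = c), μ (B ∩ E j) := by
    gcongr with c
    rw [inter_iUnion₂]
    exact measure_biUnion_finset_le _ _
  _ = _ := sum_fiberwise t f _

lemma sum_measure_inter_biUnion_fiber_le_card_mul_add {κ : Type*} [Fintype κ] [DecidableEq κ]
    (f : ι → κ) {t : Finset ι} {E : ι → Set X} (hE : ∀ j ∈ t, MeasurableSet (E j))
    (T S : Set X) {K : ℝ≥0∞} (hK : ∀ x ∈ T \ S, ∑ j ∈ t, (E j).indicator 1 x ≤ K) :
    ∑ c, μ (T ∩ ⋃ j ∈ t.filter (f · = c), E j) ≤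
      Fintype.card κ * μ (T ∩ S) + K * μ (T \ S) := calc
  _ ≤ ∑ c, (μ (T ∩ S) + μ (T \ S ∩ ⋃ j ∈ t.filter (f · = c), E j)) := by
    gcongr with c
    refine (measure_mono fun x hx => ?_).trans (measure_union_le _ _)
    obtain ⟨hxT, hxV⟩ := hx
    exact (em (x ∈ S)).imp (fun hxS => ⟨hxT, hxS⟩) fun hxS => ⟨⟨hxT, hxS⟩, hxV⟩
  _ = Fintype.card κ * μ (T ∩ S) + ∑ c, μ (T \ S ∩ ⋃ j ∈ t.filter (f · = c), E j) := by
    rw [sum_add_distrib, sum_const, card_univ, nsmul_eq_mul]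
  _ ≤ _ := by
    gcongr
    exact (sum_measure_inter_biUnion_fiber_le f t E _).trans
      (sum_measure_inter_le_mul_of_sum_indicator_le hE hK)

lemma exists_measure_inter_biUnion_fiber_le {κ : Type*} [Fintype κ] [DecidableEq κ]
    [Nonempty κ] (f : ι → κ) {t : Finset ι} {E : ι → Set X} (hE : ∀ j ∈ t, MeasurableSet (E j))
    {T : Set X} {K η γ : ℝ≥0∞} (hη : η < 1) (hγ : γ < 1 - η)
    (hN : K * (1 - η) / (1 - η - γ) ≤ Fintype.card κ)
    (hsparse : μ {x ∈ T | K < ∑ j ∈ t, (E j).indicator 1 x} ≤ η * μ T) :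
    ∃ c, μ (T ∩ ⋃ j ∈ t.filter (f · = c), E j) ≤ (1 - γ) * μ T := by
  set S := {x | K < ∑ j ∈ t, (E j).indicator (1 : X → ℝ≥0∞) x}
  have hS : MeasurableSet S := measurableSet_lt measurable_const <|
    Finset.measurable_sum _ fun j hj => measurable_one.indicator (hE j hj)
  have hsplit : μ (T ∩ S) + μ (T \ S) = μ T := measure_inter_add_sdiff T hS
  have hbound := sum_measure_inter_biUnion_fiber_le_card_mul_add (μ := μ) f hE T S
    fun x hx => not_lt.mp hx.2
  have hA : μ (T ∩ S) ≤ η * (μ (T ∩ S) + μ (T \ S)) := by rw [hsplit]; exact hsparse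
  obtain ⟨c, -, hc⟩ := ENNReal.exists_le_of_sum_le univ_nonempty <| calc
    _ ≤ _ := hbound
    _ ≤ Fintype.card κ * (1 - γ) * (μ (T ∩ S) + μ (T \ S)) :=
      ENNReal.mul_add_mul_le_of_le_mul hη hγ hN hA
    _ = ∑ _c : κ, (1 - γ) * μ T := by rw [hsplit, sum_const, card_univ, nsmul_eq_mul, mul_assoc]
  exact ⟨c, hc⟩

lemma measure_setOf_lt_sum_indicator_mono {s t : Finset ι} (hst : s ⊆ t) (T : Set X)
    (E : ι → Set X) (K : ℝ≥0∞) :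
    μ {x ∈ T | K < ∑ j ∈ s, (E j).indicator 1 x} ≤
      μ {x ∈ T | K < ∑ j ∈ t, (E j).indicator 1 x} :=
  measure_mono fun _ hx => ⟨hx.1, hx.2.trans_le (sum_le_sum_of_subset hst)⟩

variable [LinearOrder ι] {κ : Type*} [DecidableEq κ] {a : ι} {s : Finset ι}

lemma filter_insert_update_of_mem (ha : ∀ x ∈ s, x < a) (f : ι → κ) (c : κ) {i : ι}
    (hi : i ∈ s) :
    (insert a s).filter (fun j => Function.update f a c j = Function.update f a c i ∧ j < i) =
      s.filter (fun j => f j = f i ∧ j < i) := by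
  ext j
  simp only [mem_filter]
  grind [Function.update_apply]

lemma filter_insert_update_self (ha : ∀ x ∈ s, x < a) (f : ι → κ) (c : κ) :
    (insert a s).filter (fun j => Function.update f a c j = Function.update f a c a ∧ j < a) =
      s.filter (f · = c) := by
  ext j
  simp only [mem_filter]
  grind [Function.update_apply]

end

theorem stmt8_general {X : Type*} [MeasurableSpace X] (μ : Measure X)
    {ι : Type*} [LinearOrder ι] (s : Finset ι) (E : ι → Set X)
    (hmeas : ∀ i ∈ s, MeasurableSet (E i))
    (K η γ : ℝ≥0∞) (hη1 : η < 1) (hγ : γ < 1 - η)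
    (horder : ∀ i ∈ s,
      μ {x ∈ E i |
          K < ∑ j ∈ s.filter (fun j => j ≤ i), (E j).indicator (1 : X → ℝ≥0∞) x} ≤
        η * μ (E i))
    (N : ℕ) (hN1 : 1 ≤ N) (hN : K * (1 - η) / (1 - η - γ) ≤ (N : ℝ≥0∞)) :
    ∃ f : ι → Fin N, ∀ i ∈ s,
      μ (E i ∩ ⋃ j ∈ s.filter (fun j => f j = f i ∧ j < i), E j) ≤
        (1 - γ) * μ (E i) := by
  have : Nonempty (Fin N) := ⟨⟨0, hN1⟩⟩
  induction s using Finset.induction_on_max with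
  | empty => exact ⟨fun _ => ⟨0, hN1⟩, by simp⟩
  | insert a s ha ih =>
    have hsub := Finset.subset_insert a s
    obtain ⟨f, hf⟩ := ih (fun i hi => hmeas i (hsub hi)) fun i hi =>
      (measure_setOf_lt_sum_indicator_mono (filter_subset_filter _ hsub) _ E K).trans
        (horder i (hsub hi))
    have hs_le_a : s ⊆ (insert a s).filter (· ≤ a) := fun j hj =>
      mem_filter.mpr ⟨hsub hj, (ha j hj).le⟩
    obtain ⟨c, hc⟩ := exists_measure_inter_biUnion_fiber_le f (fun j hj => hmeas j (hsub hj))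
      hη1 hγ (by rwa [Fintype.card_fin]) <|
      (measure_setOf_lt_sum_indicator_mono hs_le_a _ E K).trans (horder a (mem_insert_self a s))
    refine ⟨Function.update f a c, fun i hi => ?_⟩
    rcases mem_insert.mp hi with rfl | hi
    · rwa [filter_insert_update_self ha]
    · rw [filter_insert_update_of_mem ha f c hi]
      exact hf i hi

theorem stmt8 {X : Type*} [MeasurableSpace X] (μ : Measure X)
    {ι : Type*} [LinearOrder ι] (s : Finset ι) (E : ι → Set X)
    (hmeas : ∀ i ∈ s, MeasurableSet (E i))
    (hpos : ∀ i ∈ s, 0 < μ (E i)) (hfin : ∀ i ∈ s, μ (E i) < ⊤)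
    (K η γ : ℝ≥0∞) (hη0 : 0 < η) (hη1 : η < 1) (hγ0 : 0 < γ) (hγ : γ < 1 - η)
    (horder : ∀ i ∈ s,
      μ {x ∈ E i |
          K < ∑ j ∈ s.filter (fun j => j ≤ i), (E j).indicator (1 : X → ℝ≥0∞) x} ≤
        η * μ (E i))
    (N : ℕ) (hN1 : 1 ≤ N) (hN : K * (1 - η) / (1 - η - γ) ≤ (N : ℝ≥0∞)) :
    ∃ f : ι → Fin N, ∀ i ∈ s,
      μ (E i ∩ ⋃ j ∈ s.filter (fun j => f j = f i ∧ j < i), E j) ≤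
        (1 - γ) * μ (E i) :=
  stmt8_general μ s E hmeas K η γ hη1 hγ horder N hN1 hN
end

section
/- For Λ ≥ 2 and integer M ≥ 1, the collection E = {R_1, …, R_M} with R_m = [0,1) ∪ [m, m+(Λ−1)^{-1}) ⊆ ℝ is Λ^{-1}-sparse with respect to Lebesgue measure: the pairwise-disjoint sets E(R_m) = [m, m+(Λ−1)^{-1}) satisfy |E(R_m)| = Λ^{-1} |R_m|. In particular ‖E‖_{Carleson} ≤ Λ. -/
/-! The sets `E(R_m) = [m + 1, m + 1 + c)`, `c = (Λ - 1)⁻¹`, are unit-spaced intervals of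
length `c ≤ 1`, hence pairwise disjoint, and `|R_m| = 1 + c = Λ c = Λ |E(R_m)|`. Sparseness then
gives the Carleson bound: `∑ |R_m| ≤ Λ ∑ |E(R_m)| = Λ |⋃ E(R_m)| ≤ Λ |⋃ R_m|`. -/

open Function MeasureTheory Set
open scoped ENNReal

theorem MeasureTheory.sum_measure_le_mul_measure_biUnion_of_sparse {ι α : Type*}
    [MeasurableSpace α] (μ : Measure α) {R E : ι → Set α} {Λ : ℝ≥0∞}
    (hER : ∀ i, E i ⊆ R i) (hE : Pairwise (Disjoint on E))
    (hEm : ∀ i, MeasurableSet (E i))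
    (hsparse : ∀ i, μ (R i) ≤ Λ * μ (E i)) (F : Finset ι) :
    ∑ i ∈ F, μ (R i) ≤ Λ * μ (⋃ i ∈ F, R i) :=
  calc ∑ i ∈ F, μ (R i)
    _ ≤ ∑ i ∈ F, Λ * μ (E i) := Finset.sum_le_sum fun i _ => hsparse i
    _ = Λ * μ (⋃ i ∈ F, E i) := by
      rw [← Finset.mul_sum, measure_biUnion_finset (hE.set_pairwise _) fun i _ => hEm i]
    _ ≤ Λ * μ (⋃ i ∈ F, R i) := by gcongr with i; exact hER i

theorem pairwise_disjoint_Ico_natCast_add_one_of_le {c : ℝ} (hc : c ≤ 1) :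
    Pairwise (Disjoint on fun n : ℕ => Ico ((n : ℝ) + 1) ((n : ℝ) + 1 + c)) := by
  have hunit :=
    (pairwise_disjoint_Ico_add_intCast (1 : ℝ)).comp_of_injective Nat.cast_injective
  refine fun m n hmn => (hunit hmn).mono ?_ ?_ <;>
    · simp only [Int.cast_natCast, add_comm (1 : ℝ)]
      exact Ico_subset_Ico_right (by linarith)

theorem volume_Ico_union_Ico_of_le {a b c d : ℝ} (hbc : b ≤ c) :
    volume (Ico a b ∪ Ico c d) = volume (Ico a b) + volume (Ico c d) :=
  measure_union (Ico_disjoint_Ico_same.mono_right (Ico_subset_Ico_left hbc))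
    measurableSet_Ico

theorem one_add_inv_sub_one {Λ : ℝ} (hΛ : Λ ≠ 1) :
    1 + (Λ - 1)⁻¹ = Λ * (Λ - 1)⁻¹ := by
  field_simp [sub_ne_zero.2 hΛ]
  ring

theorem stmt11_general (Λ : ℝ) (hΛ : 2 ≤ Λ) (M : ℕ) :
    let R : Fin M → Set ℝ := fun m =>
      Set.Ico (0 : ℝ) 1 ∪ Set.Ico ((m : ℝ) + 1) ((m : ℝ) + 1 + (Λ - 1)⁻¹)
    let Esel : Fin M → Set ℝ := fun m =>
      Set.Ico ((m : ℝ) + 1) ((m : ℝ) + 1 + (Λ - 1)⁻¹)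
    (∀ m, Esel m ⊆ R m) ∧
    (Set.univ.PairwiseDisjoint Esel) ∧
    (∀ m, volume (Esel m) = (ENNReal.ofReal Λ)⁻¹ * volume (R m)) ∧
    (∀ F : Finset (Fin M),
      ∑ m ∈ F, volume (R m) ≤ ENNReal.ofReal Λ * volume (⋃ m ∈ F, R m)) := by
  intro R Esel
  have hc : 0 ≤ (Λ - 1)⁻¹ := inv_nonneg.2 (by linarith)
  have hER : ∀ m, Esel m ⊆ R m := fun m => subset_union_right
  have hE : Pairwise (Disjoint on Esel) :=
    (pairwise_disjoint_Ico_natCast_add_one_of_le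
      (inv_le_one_of_one_le₀ (by linarith))).comp_of_injective Fin.val_injective
  have hR : ∀ m, volume (R m) = ENNReal.ofReal Λ * volume (Esel m) := fun m => by
    rw [volume_Ico_union_Ico_of_le (by linarith [(m : ℕ).cast_nonneg (α := ℝ)]),
      Real.volume_Ico, Real.volume_Ico, sub_zero, add_sub_cancel_left,
      ← ENNReal.ofReal_add zero_le_one hc,
      ← ENNReal.ofReal_mul (by linarith), one_add_inv_sub_one (by linarith)]
  refine ⟨hER, hE.set_pairwise _, fun m => ?_,
    sum_measure_le_mul_measure_biUnion_of_sparse volume hER hE (fun _ => measurableSet_Ico)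
      fun m => (hR m).le⟩
  rw [hR, ENNReal.inv_mul_cancel_left (ENNReal.ofReal_pos.2 (by linarith)).ne'
    ENNReal.ofReal_ne_top]

theorem stmt11 (Λ : ℝ) (hΛ : 2 ≤ Λ) (M : ℕ) (hM : 1 ≤ M) :
    let R : Fin M → Set ℝ := fun m =>
      Set.Ico (0 : ℝ) 1 ∪ Set.Ico ((m : ℝ) + 1) ((m : ℝ) + 1 + (Λ - 1)⁻¹)
    let Esel : Fin M → Set ℝ := fun m =>
      Set.Ico ((m : ℝ) + 1) ((m : ℝ) + 1 + (Λ - 1)⁻¹)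
    (∀ m, Esel m ⊆ R m) ∧
    (Set.univ.PairwiseDisjoint Esel) ∧
    (∀ m, volume (Esel m) = (ENNReal.ofReal Λ)⁻¹ * volume (R m)) ∧
    (∀ F : Finset (Fin M),
      ∑ m ∈ F, volume (R m) ≤ ENNReal.ofReal Λ * volume (⋃ m ∈ F, R m)) :=
  stmt11_general Λ hΛ M
end

section
/- For Λ ≥ 2, integer M ≥ 1, and the collection E = {R_1, …, R_M} with R_m = [0,1) ∪ [m, m+(Λ−1)^{-1}), any subcollection F ⊆ E with #F = k satisfies (∑_{R∈F} |R|)/|sh(F)| = k(1+(Λ−1)^{-1})/(1 + k(Λ−1)^{-1}), and this quantity tends to Λ as k → ∞; in particular if k ≥ Λ−1 then (∑_{R∈F} |R|)/|sh(F)| ≥ Λ/2. -/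
open MeasureTheory Set Filter
open scoped ENNReal
open Function

/-! The sets `R m` share `[0, 1)` and otherwise consist of intervals of length `ε = (Λ - 1)⁻¹ ≤ 1`
starting at distinct integers `m + 1 ≥ 1`; these pieces are pairwise disjoint, so measures add:
`|R m| = 1 + ε` and `|⋃ m ∈ F, R m| = 1 + k ε` for `#F = k`. The ratio `k (1 + ε) / (1 + k ε)`
tends to `(1 + ε) / ε = Λ`; clearing denominators, it is at least `Λ / 2` iff `Λ - 1 + k ≤ 2 k`. -/

theorem MeasureTheory.measure_biUnion_finset_const_union {α ι : Type*} [MeasurableSpace α]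
    (μ : Measure α) {A : Set α} {B : ι → Set α} {F : Finset ι} (hF : F.Nonempty)
    (hB : (F : Set ι).PairwiseDisjoint B) (hAB : ∀ i ∈ F, Disjoint A (B i))
    (hBm : ∀ i ∈ F, MeasurableSet (B i)) :
    μ (⋃ i ∈ F, (A ∪ B i)) = μ A + ∑ i ∈ F, μ (B i) := by
  have hunion : ⋃ i ∈ F, (A ∪ B i) = A ∪ ⋃ i ∈ F, B i := (sup_biSup hF).symm
  rw [hunion, measure_union (disjoint_iUnion₂_right.mpr hAB) (F.measurableSet_biUnion hBm),
    measure_biUnion_finset hB hBm]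

lemma disjoint_Ico_zero_one_Ico_natCast_add_one (n : ℕ) (ε : ℝ) :
    Disjoint (Ico (0 : ℝ) 1) (Ico ((n : ℝ) + 1) (n + 1 + ε)) :=
  (Iio_disjoint_Ici (by simp)).mono Ico_subset_Iio_self Ico_subset_Ici_self

lemma pairwise_disjoint_Ico_natCast_add_one {ε : ℝ} (hε : ε ≤ 1) :
    Pairwise (Disjoint on fun n : ℕ => Ico ((n : ℝ) + 1) (n + 1 + ε)) := by
  have hsub (n : ℕ) : Ico ((n : ℝ) + 1) (n + 1 + ε) ⊆ Ico (1 + ((n : ℤ) : ℝ)) (1 + (n : ℤ) + 1) := by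
    rw [Int.cast_natCast, add_comm 1 (n : ℝ)]
    exact Ico_subset_Ico_right (by linarith)
  exact fun m n hmn => ((pairwise_disjoint_Ico_add_intCast (1 : ℝ))
    (Nat.cast_injective.ne hmn)).mono (hsub m) (hsub n)

lemma div_two_mul_one_add_mul_inv_sub_one_le {Λ k : ℝ} (hΛ : 1 < Λ) (hk : Λ - 1 ≤ k) :
    Λ / 2 * (1 + k * (Λ - 1)⁻¹) ≤ k * (1 + (Λ - 1)⁻¹) := by
  have hd : 0 < Λ - 1 := by linarith
  rw [← sub_nonneg]
  have : k * (1 + (Λ - 1)⁻¹) - Λ / 2 * (1 + k * (Λ - 1)⁻¹) = Λ / 2 * (Λ - 1)⁻¹ * (k - (Λ - 1)) := by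
    field_simp; ring
  rw [this]
  have := sub_nonneg.mpr hk
  positivity

lemma tendsto_natCast_mul_div_one_add_natCast_mul {a b : ℝ} (hb : b ≠ 0) :
    Tendsto (fun k : ℕ => k * a / (1 + k * b)) atTop (nhds (a / b)) := by
  have hlim := (tendsto_natCast_div_add_atTop b⁻¹).const_mul (a / b)
  rw [mul_one] at hlim
  refine hlim.congr fun k => ?_
  field_simp
  ring

lemma volume_Ico_zero_one_union_Ico_natCast_add_one (n : ℕ) {ε : ℝ} (hε : 0 ≤ ε) :
    volume (Ico (0 : ℝ) 1 ∪ Ico ((n : ℝ) + 1) (n + 1 + ε)) = ENNReal.ofReal (1 + ε) := by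
  rw [measure_union (disjoint_Ico_zero_one_Ico_natCast_add_one n ε) measurableSet_Ico,
    Real.volume_Ico, Real.volume_Ico, add_sub_cancel_left, sub_zero, ENNReal.ofReal_add zero_le_one hε]

theorem stmt12 (Λ : ℝ) (hΛ : 2 ≤ Λ) (M : ℕ) (R : Fin M → Set ℝ)
    (hR : ∀ m, R m =
      Set.Ico (0 : ℝ) 1 ∪ Set.Ico ((m : ℝ) + 1) ((m : ℝ) + 1 + (Λ - 1)⁻¹)) :
    (∀ F : Finset (Fin M), F.Nonempty →
      (∑ m ∈ F, volume (R m) = ENNReal.ofReal ((F.card : ℝ) * (1 + (Λ - 1)⁻¹))) ∧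
      (volume (⋃ m ∈ F, R m) = ENNReal.ofReal (1 + (F.card : ℝ) * (Λ - 1)⁻¹)) ∧
      (Λ - 1 ≤ (F.card : ℝ) →
        ENNReal.ofReal (Λ / 2) * volume (⋃ m ∈ F, R m) ≤ ∑ m ∈ F, volume (R m))) ∧
    Tendsto (fun k : ℕ => ((k : ℝ) * (1 + (Λ - 1)⁻¹)) / (1 + (k : ℝ) * (Λ - 1)⁻¹))
      atTop (nhds Λ) := by
  set ε := (Λ - 1)⁻¹ with hε_def
  have hε_pos : 0 < ε := inv_pos.mpr (by linarith)
  have hε_le_one : ε ≤ 1 := inv_le_one_of_one_le₀ (by linarith)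
  refine ⟨fun F hF => ?_, ?_⟩
  · have hsum : ∑ m ∈ F, volume (R m) = ENNReal.ofReal (F.card * (1 + ε)) := by
      simp only [hR, volume_Ico_zero_one_union_Ico_natCast_add_one _ hε_pos.le, Finset.sum_const,
        nsmul_eq_mul, ENNReal.ofReal_mul (Nat.cast_nonneg _), ENNReal.ofReal_natCast]
    have hunion : volume (⋃ m ∈ F, R m) = ENNReal.ofReal (1 + F.card * ε) := by
      simp only [hR]
      rw [measure_biUnion_finset_const_union volume hF
        (((pairwise_disjoint_Ico_natCast_add_one hε_le_one).comp_of_injective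
          Fin.val_injective).set_pairwise _)
        (fun m _ => disjoint_Ico_zero_one_Ico_natCast_add_one m ε) (fun _ _ => measurableSet_Ico)]
      simp only [Real.volume_Ico, add_sub_cancel_left, sub_zero, Finset.sum_const, nsmul_eq_mul,
        ENNReal.ofReal_add zero_le_one (by positivity : 0 ≤ (F.card : ℝ) * ε),
        ENNReal.ofReal_mul (Nat.cast_nonneg _), ENNReal.ofReal_natCast]
    refine ⟨hsum, hunion, fun hk => ?_⟩
    rw [hsum, hunion, ← ENNReal.ofReal_mul (by linarith)]
    exact ENNReal.ofReal_le_ofReal (div_two_mul_one_add_mul_inv_sub_one_le (by linarith) hk)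
  · have hlimit : (1 + ε) / ε = Λ := by
      rw [add_div, div_self hε_pos.ne', hε_def, one_div, inv_inv]
      ring
    simpa only [hlimit] using tendsto_natCast_mul_div_one_add_natCast_mul (a := 1 + ε) hε_pos.ne'
end

section
/- Let E be a finite collection of measurable sets with finite positive measure, μ a positive measure, and suppose that E admits functions as produced by the general greedy algorithm: there is a total order ≺ on E, a constant A ≥ 1 with Λ_μ(E_{⪰R}) ≤ A for all R, and functions f_R = (1_R/h_{E_{⪰R}})·1_{{h_{E_{⪰R}} ≤ 2Λ_μ(E_{⪰R})}} with ∫ f_R dμ ≥ μ(R)/(2Λ_μ(E_{⪰R})). Then pointwise ∑_{R∈E} f_R(x) ≤ C log(e + A) for an absolute constant C, and consequently ‖E‖_{Carleson(μ)} ≤ C' A log(e + A). -/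
/-!
Fix `x` and let `R₁ ≺ ⋯ ≺ R_N` be the sets of `E` containing it. The tail height
`h_{E_{⪰Rₙ}}(x)` counts `Rₙ, …, R_N`, so `f_{Rₙ}(x) ≤ 1/(1 + N - n)`: distinct sets contribute
reciprocals of distinct positive integers, and only integers at most `2A` survive the cut-off.
Hence `∑ f_R(x)` is at most the harmonic number `H_{⌊2A⌋} ≤ 3 log(e + A)`. Since `f_R` lives on
`R` and `μ(R) ≤ 2A ∫ f_R`, integrating the pointwise bound over `⋃ F` gives the Carleson bound.
-/

open MeasureTheory Set
open scoped ENNReal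

lemma harmonic_le_three_mul_log_exp_add {n : ℕ} {A : ℝ} (hn : (n : ℝ) ≤ 2 * A) :
    (harmonic n : ℝ) ≤ 3 * Real.log (Real.exp 1 + A) := by
  have hA : 0 ≤ A := by linarith [n.cast_nonneg (α := ℝ)]
  have hlog_ge_one : 1 ≤ Real.log (Real.exp 1 + A) := by
    rw [Real.le_log_iff_exp_le (by positivity)]; linarith
  have hlog2 : Real.log 2 ≤ 1 := by
    linarith [Real.log_le_sub_one_of_pos (by norm_num : (0:ℝ) < 2)]
  have hlog_n : Real.log n ≤ Real.log 2 + Real.log (Real.exp 1 + A) := by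
    rcases n.eq_zero_or_pos with rfl | hn0
    · simp only [Nat.cast_zero, Real.log_zero]; linarith [Real.log_pos one_lt_two]
    · calc Real.log n ≤ Real.log (2 * (Real.exp 1 + A)) :=
            Real.log_le_log (by exact_mod_cast hn0) (by linarith [Real.exp_pos 1])
        _ = Real.log 2 + Real.log (Real.exp 1 + A) := Real.log_mul two_ne_zero (by positivity)
  linarith [harmonic_le_one_add_log n]

lemma sum_Icc_inv_natCast_eq_ofReal_harmonic (N : ℕ) :
    ∑ k ∈ Finset.Icc 1 N, (k : ℝ≥0∞)⁻¹ = ENNReal.ofReal (harmonic N) := by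
  rw [harmonic_eq_sum_Icc, Rat.cast_sum, ENNReal.ofReal_sum_of_nonneg (fun k _ => by positivity)]
  refine Finset.sum_congr rfl fun k hk => ?_
  have hk0 : (0 : ℝ) < k := by exact_mod_cast (Finset.mem_Icc.1 hk).1
  rw [Rat.cast_inv, Rat.cast_natCast, ENNReal.ofReal_inv_of_pos hk0, ENNReal.ofReal_natCast]

namespace Finset

variable {ι : Type*} [LinearOrder ι]

lemma strictAntiOn_card_filter_le (T : Finset ι) :
    StrictAntiOn (fun i => #{j ∈ T | i ≤ j}) T := by
  intro i hi j _ hij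
  refine card_lt_card <| (ssubset_iff_of_subset ?_).2 ⟨i, ?_, ?_⟩
  · intro k
    simp only [mem_filter]
    exact fun ⟨hk, hjk⟩ => ⟨hk, hij.le.trans hjk⟩
  · simpa using hi
  · simp [hij]

/-- The tail counts `#{j ∈ T | i ≤ j}` of distinct `i ∈ T` are distinct positive integers. -/
lemma sum_inv_card_filter_le_le_sum_Icc (T : Finset ι) (N : ℕ) :
    ∑ i ∈ T with #{j ∈ T | i ≤ j} ≤ N, (#{j ∈ T | i ≤ j} : ℝ≥0∞)⁻¹ ≤
      ∑ k ∈ Icc 1 N, (k : ℝ≥0∞)⁻¹ := by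
  rw [← sum_image (f := fun k : ℕ => (k : ℝ≥0∞)⁻¹)
    ((strictAntiOn_card_filter_le T).injOn.mono (filter_subset _ _))]
  refine sum_le_sum_of_subset fun k hk => ?_
  obtain ⟨i, hi, rfl⟩ := mem_image.1 hk
  rw [mem_filter] at hi
  exact mem_Icc.2 ⟨card_pos.2 ⟨i, mem_filter.2 ⟨hi.1, le_rfl⟩⟩, hi.2⟩

end Finset

lemma sum_measure_le_mul_measure_biUnion {X ι : Type*} [MeasurableSpace X] (μ : Measure X)
    {s : Finset ι} {E : ι → Set X} {f : ι → X → ℝ≥0∞} {K B : ℝ≥0∞}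
    (hf : ∀ i ∈ s, Measurable (f i)) (hsupp : ∀ i ∈ s, ∀ x ∉ E i, f i x = 0)
    (hB : ∀ x, ∑ i ∈ s, f i x ≤ B) (hK : ∀ i ∈ s, μ (E i) ≤ K * ∫⁻ x, f i x ∂μ) :
    ∑ i ∈ s, μ (E i) ≤ K * B * μ (⋃ i ∈ s, E i) := by
  have hsum_le : ∀ x, ∑ i ∈ s, f i x ≤ (⋃ i ∈ s, E i).indicator (fun _ => B) x := fun x => by
    by_cases hx : x ∈ ⋃ i ∈ s, E i
    · rw [indicator_of_mem hx]; exact hB x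
    · rw [indicator_of_notMem hx]
      exact (Finset.sum_eq_zero fun i hi => hsupp i hi x fun hxi => hx (mem_biUnion hi hxi)).le
  calc ∑ i ∈ s, μ (E i) ≤ ∑ i ∈ s, K * ∫⁻ x, f i x ∂μ := Finset.sum_le_sum hK
    _ = K * ∫⁻ x, ∑ i ∈ s, f i x ∂μ := by rw [← Finset.mul_sum, lintegral_finsetSum s hf]
    _ ≤ K * (B * μ (⋃ i ∈ s, E i)) := by
        gcongr
        exact (lintegral_mono hsum_le).trans (lintegral_indicator_const_le _ _)
    _ = K * B * μ (⋃ i ∈ s, E i) := (mul_assoc _ _ _).symm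

noncomputable section

open Finset

variable {X ι : Type*} [LinearOrder ι] (s : Finset ι) (E : ι → Set X)

/-- The height function `h_{E_{⪰i}}` of the tail collection. -/
def tailHeight (i : ι) (y : X) : ℝ≥0∞ :=
  ∑ j ∈ s with i ≤ j, (E j).indicator 1 y

/-- The function `f_i` of the greedy algorithm, with the threshold `2 Λ_μ(E_{⪰i})` replaced by
`t i`. -/
def greedyWeight (t : ι → ℝ≥0∞) (i : ι) : X → ℝ≥0∞ :=
  {y | tailHeight s E i y ≤ t i}.indicator fun y => (E i).indicator 1 y / tailHeight s E i y

open scoped Classical in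
lemma tailHeight_eq_card (i : ι) (x : X) :
    tailHeight s E i x = #{j ∈ {j ∈ s | x ∈ E j} | i ≤ j} := by
  simp only [tailHeight, indicator_apply, Pi.one_apply, sum_boole, filter_filter, and_comm]

lemma measurable_tailHeight [MeasurableSpace X] (hE : ∀ i ∈ s, MeasurableSet (E i)) (i : ι) :
    Measurable (tailHeight s E i) :=
  Finset.measurable_sum _ fun j hj => measurable_one.indicator (hE j (mem_filter.1 hj).1)

lemma measurable_greedyWeight [MeasurableSpace X] (hE : ∀ i ∈ s, MeasurableSet (E i))
    (t : ι → ℝ≥0∞) {i : ι} (hi : i ∈ s) : Measurable (greedyWeight s E t i) :=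
  ((measurable_one.indicator (hE i hi)).div (measurable_tailHeight s E hE i)).indicator
    (measurableSet_le (measurable_tailHeight s E hE i) measurable_const)

lemma greedyWeight_eq_zero_of_notMem (t : ι → ℝ≥0∞) {i : ι} {x : X} (hx : x ∉ E i) :
    greedyWeight s E t i x = 0 := by
  simp [greedyWeight, indicator_of_notMem hx]

lemma greedyWeight_le_ite {t : ι → ℝ≥0∞} {a : ℝ} {i : ι} (ht : t i ≤ ENNReal.ofReal a) (x : X)
    {n : ℕ} (hn : tailHeight s E i x = n) :
    greedyWeight s E t i x ≤ if n ≤ ⌊a⌋₊ then (n : ℝ≥0∞)⁻¹ else 0 := by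
  split_ifs with hna
  · refine (indicator_le_self' (fun _ _ => zero_le) x).trans ?_
    rw [hn, ENNReal.div_eq_inv_mul]
    exact mul_le_of_le_one_right zero_le (indicator_apply_le' (fun _ => le_rfl) fun _ => zero_le)
  · refine (indicator_of_notMem (fun hx => ?_) _).le
    have han : ENNReal.ofReal a < n :=
      (ENNReal.ofReal_lt_natCast (by omega)).2 (Nat.lt_of_floor_lt (not_le.1 hna))
    exact (hx.trans_lt (hn ▸ ht.trans_lt han)).false

open scoped Classical in
lemma sum_greedyWeight_le {t : ι → ℝ≥0∞} {a : ℝ} (ht : ∀ i ∈ s, t i ≤ ENNReal.ofReal a) (x : X) :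
    ∑ i ∈ s, greedyWeight s E t i x ≤ ENNReal.ofReal (harmonic ⌊a⌋₊) := by
  set T := {j ∈ s | x ∈ E j}
  calc ∑ i ∈ s, greedyWeight s E t i x = ∑ i ∈ T, greedyWeight s E t i x :=
        (sum_filter_of_ne fun i _ h =>
          by_contra fun hx => h (greedyWeight_eq_zero_of_notMem s E t hx)).symm
    _ ≤ ∑ i ∈ T, if #{j ∈ T | i ≤ j} ≤ ⌊a⌋₊ then (#{j ∈ T | i ≤ j} : ℝ≥0∞)⁻¹ else 0 :=
        sum_le_sum fun i hi =>
          greedyWeight_le_ite s E (ht i (mem_filter.1 hi).1) x (tailHeight_eq_card s E i x)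
    _ = ∑ i ∈ T with #{j ∈ T | i ≤ j} ≤ ⌊a⌋₊, (#{j ∈ T | i ≤ j} : ℝ≥0∞)⁻¹ :=
        (sum_filter _ _).symm
    _ ≤ ∑ k ∈ Icc 1 ⌊a⌋₊, (k : ℝ≥0∞)⁻¹ := sum_inv_card_filter_le_le_sum_Icc T _
    _ = ENNReal.ofReal (harmonic ⌊a⌋₊) := sum_Icc_inv_natCast_eq_ofReal_harmonic _

end

theorem stmt15 :
    ∃ C C' : ℝ, 0 < C ∧ 0 < C' ∧
      ∀ {X : Type} [MeasurableSpace X] (μ : Measure X)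
        {ι : Type} [LinearOrder ι] (s : Finset ι) (E : ι → Set X),
        (∀ i ∈ s, MeasurableSet (E i)) →
        (∀ i ∈ s, 0 < μ (E i)) → (∀ i ∈ s, μ (E i) < ⊤) →
        ∀ A : ℝ, 1 ≤ A →
        -- Λi i is the average height Λ_μ(E_{⪰i}) of the tail collection
        let Λi : ι → ℝ≥0∞ := fun i =>
          (∑ j ∈ s.filter (fun j => i ≤ j), μ (E j)) /
            μ (⋃ j ∈ s.filter (fun j => i ≤ j), E j)
        -- f i is the function f_R produced by the greedy algorithm
        let f : ι → X → ℝ≥0∞ := fun i =>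
          ({y | (∑ j ∈ s.filter (fun j => i ≤ j), (E j).indicator (1 : X → ℝ≥0∞) y) ≤
              2 * Λi i}).indicator
            (fun y => (E i).indicator (1 : X → ℝ≥0∞) y /
              ∑ j ∈ s.filter (fun j => i ≤ j), (E j).indicator (1 : X → ℝ≥0∞) y)
        (∀ i ∈ s, Λi i ≤ ENNReal.ofReal A) →
        (∀ i ∈ s, μ (E i) / (2 * Λi i) ≤ ∫⁻ x, f i x ∂μ) →
        (∀ x, ∑ i ∈ s, f i x ≤ ENNReal.ofReal (C * Real.log (Real.exp 1 + A))) ∧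
        (∀ F ⊆ s, ∑ i ∈ F, μ (E i) ≤
          ENNReal.ofReal (C' * A * Real.log (Real.exp 1 + A)) * μ (⋃ i ∈ F, E i)) := by
  refine ⟨3, 6, by norm_num, by norm_num, ?_⟩
  intro X _ μ ι _ s E hE _ _ A hA Λi f hΛ hint
  have h2A : ENNReal.ofReal (2 * A) = 2 * ENNReal.ofReal A := by
    rw [ENNReal.ofReal_mul zero_le_two, ENNReal.ofReal_ofNat]
  have h2Λ : ∀ i ∈ s, 2 * Λi i ≤ ENNReal.ofReal (2 * A) := fun i hi => by
    rw [h2A]; gcongr; exact hΛ i hi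
  have hpointwise : ∀ x, ∑ i ∈ s, f i x ≤ ENNReal.ofReal (3 * Real.log (Real.exp 1 + A)) :=
    fun x => (sum_greedyWeight_le s E h2Λ x).trans <| ENNReal.ofReal_le_ofReal <|
      harmonic_le_three_mul_log_exp_add (Nat.floor_le (by positivity))
  have hmass : ∀ i ∈ s, μ (E i) ≤ ENNReal.ofReal (2 * A) * ∫⁻ x, f i x ∂μ := fun i hi => by
    rw [mul_comm, ← ENNReal.div_le_iff (ENNReal.ofReal_pos.2 (by linarith)).ne'
      ENNReal.ofReal_ne_top]
    exact (ENNReal.div_le_div_left (h2Λ i hi) _).trans (hint i hi)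
  refine ⟨hpointwise, fun F hF => ?_⟩
  calc ∑ i ∈ F, μ (E i)
      ≤ ENNReal.ofReal (2 * A) * ENNReal.ofReal (3 * Real.log (Real.exp 1 + A)) *
          μ (⋃ i ∈ F, E i) :=
        sum_measure_le_mul_measure_biUnion (f := f) μ
          (fun i hi => measurable_greedyWeight s E hE (fun j => 2 * Λi j) (hF hi))
          (fun i _ x hx => greedyWeight_eq_zero_of_notMem s E (fun j => 2 * Λi j) hx)
          (fun x => (Finset.sum_le_sum_of_subset hF).trans (hpointwise x))
          (fun i hi => hmass i (hF hi))
    _ = ENNReal.ofReal (6 * A * Real.log (Real.exp 1 + A)) * μ (⋃ i ∈ F, E i) := by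
        rw [← ENNReal.ofReal_mul (by positivity)]
        ring_nf
end

section
/- Fix integers N ≥ 1 and Λ ≥ 2. Consider the dyadic rectangles R_m = [0, 2^m) × [j₀, j₀ + 2^{-m}) for m = 0, …, M−1, with j₀ = Λ−2, and the measure μ = δ_{(0,j₀)} + ∑_{m=0}^{M-1} (1+j₀)^{-1} δ_{x_m}, where x_m is a point in E(R_m) = [2^{m-1}, 2^m) × [j₀ + 2^{-m-1}, j₀ + 2^{-m}). Then every nonempty subcollection F of {R_0, …, R_{M−1}} with #F = k satisfies (∑_{R∈F} μ(R))/μ(sh(F)) = k(2+j₀)/(1+j₀+k). In particular ‖{R_0,…,R_{M−1}}‖_{Carleson(μ)} ≤ Λ, yet for M large enough, any partition into N subcollections has one piece with Carleson constant at least Λ/2. -/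
open MeasureTheory Set
open scoped ENNReal

/-!
Every `R m` contains the atom `(0, j₀)`, while the atom `x p` lies in `R m` exactly when `p = m`.
Hence, with weight `t = (1 + j₀)⁻¹`, a subcollection of `k` rectangles has `∑ μ (R m) = k (1 + t)`
and `μ (⋃ R m) = 1 + k t`, whose ratio `k (2 + j₀) / (1 + j₀ + k)` increases in `k` towards
`2 + j₀ = Λ`. By pigeonhole, one of `N` classes of a partition of `M ≥ N (Λ - 1)` rectangles has
`k ≥ Λ - 1 = 1 + j₀` members, and then the ratio is at least `Λ / 2`.
-/

section DiracSum

variable {α : Type*} [MeasurableSpace α] [MeasurableSingletonClass α]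

theorem dirac_add_sum_smul_dirac_apply_biUnion {a : α} {c : ℝ≥0∞} {x : ℕ → α}
    {R : ℕ → Set α} {M : ℕ} {F : Finset ℕ} (ha : ∀ m, a ∈ R m)
    (hx : ∀ p < M, ∀ m, x p ∈ R m ↔ p = m) (hF : F ⊆ Finset.range M) (hFne : F.Nonempty) :
    (Measure.dirac a + ∑ m ∈ Finset.range M, c • Measure.dirac (x m)) (⋃ m ∈ F, R m) =
      1 + F.card * c := by
  classical
  obtain ⟨m₀, hm₀⟩ := hFne
  have hterm : ∀ p ∈ Finset.range M,
      c * (⋃ m ∈ F, R m).indicator 1 (x p) = if p ∈ F then c else 0 := fun p hp => by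
    have hmem : x p ∈ ⋃ m ∈ F, R m ↔ p ∈ F := by
      simp only [mem_iUnion₂, hx p (Finset.mem_range.1 hp), exists_prop, exists_eq_right']
    split_ifs with h
    · simp [hmem.2 h]
    · simp [hmem.not.2 h]
  simp only [Measure.add_apply, Measure.finsetSum_apply, Measure.smul_apply,
    Measure.dirac_apply, smul_eq_mul]
  rw [indicator_of_mem (mem_iUnion₂.2 ⟨m₀, hm₀, ha m₀⟩), Finset.sum_congr rfl hterm,
    Finset.sum_ite_mem, Finset.inter_eq_right.2 hF]
  simp

theorem dirac_add_sum_smul_dirac_apply {a : α} {c : ℝ≥0∞} {x : ℕ → α}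
    {R : ℕ → Set α} {M m : ℕ} (ha : ∀ m, a ∈ R m)
    (hx : ∀ p < M, ∀ m, x p ∈ R m ↔ p = m) (hm : m < M) :
    (Measure.dirac a + ∑ m ∈ Finset.range M, c • Measure.dirac (x m)) (R m) = 1 + c := by
  simpa using dirac_add_sum_smul_dirac_apply_biUnion (F := {m}) ha hx
    (by simpa using hm) (Finset.singleton_nonempty m)

end DiracSum

def dyadicRect (j₀ : ℝ) (m : ℕ) : Set (ℝ × ℝ) :=
  Ico (0 : ℝ) (2 ^ m) ×ˢ Ico j₀ (j₀ + (2 : ℝ) ^ (-(m : ℤ)))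

def dyadicRectUpperRight (j₀ : ℝ) (m : ℕ) : Set (ℝ × ℝ) :=
  Ico ((2 : ℝ) ^ m / 2) (2 ^ m) ×ˢ Ico (j₀ + (2 : ℝ) ^ (-(m : ℤ) - 1)) (j₀ + (2 : ℝ) ^ (-(m : ℤ)))

theorem corner_mem_dyadicRect (j₀ : ℝ) (m : ℕ) : ((0 : ℝ), j₀) ∈ dyadicRect j₀ m :=
  ⟨⟨le_rfl, by positivity⟩, le_rfl, by simp⟩

theorem mem_dyadicRect_iff_of_mem_upperRight {j₀ : ℝ} {p : ℕ} {z : ℝ × ℝ}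
    (hz : z ∈ dyadicRectUpperRight j₀ p) (m : ℕ) : z ∈ dyadicRect j₀ m ↔ p = m := by
  obtain ⟨⟨hz₁, hz₂⟩, hz₃, hz₄⟩ := hz
  constructor
  · rintro ⟨⟨-, hm₁⟩, -, hm₂⟩
    have hpm : p < m + 1 := by
      rw [← pow_lt_pow_iff_right₀ (one_lt_two : (1 : ℝ) < 2), pow_succ]
      linarith
    have hmp : -(p : ℤ) - 1 < -(m : ℤ) :=
      (zpow_lt_zpow_iff_right₀ (one_lt_two : (1 : ℝ) < 2)).1 (by linarith)
    omega
  · rintro rfl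
    exact ⟨⟨(by positivity : (0 : ℝ) ≤ 2 ^ p / 2).trans hz₁, hz₂⟩,
      (le_add_of_nonneg_right (by positivity)).trans hz₃, hz₄⟩

theorem carleson_ratio_mul_eq (k : ℕ) {j₀ : ℝ} (hj₀ : 0 ≤ j₀) :
    k * (2 + j₀) / (1 + j₀ + k) * (1 + k * (1 + j₀)⁻¹) = k * (1 + (1 + j₀)⁻¹) := by
  field_simp
  ring

theorem carleson_ratio_le (k : ℕ) {j₀ : ℝ} (hj₀ : 0 ≤ j₀) :
    k * (2 + j₀) / (1 + j₀ + k) ≤ 2 + j₀ := by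
  rw [div_le_iff₀ (by positivity)]
  nlinarith

theorem half_le_carleson_ratio {k : ℕ} {j₀ : ℝ} (hj₀ : 0 ≤ j₀) (hk : 1 + j₀ ≤ k) :
    (2 + j₀) / 2 ≤ k * (2 + j₀) / (1 + j₀ + k) := by
  rw [div_le_div_iff₀ two_pos (by positivity)]
  nlinarith

theorem sum_measure_dyadicRect_eq {j₀ : ℝ} (hj₀ : 0 ≤ j₀) {c : ℝ≥0∞}
    (hc : c = ENNReal.ofReal (1 + j₀)⁻¹) {M : ℕ} {x : ℕ → ℝ × ℝ}
    (hx : ∀ m < M, x m ∈ dyadicRectUpperRight j₀ m) {F : Finset ℕ}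
    (hF : F ⊆ Finset.range M) (hFne : F.Nonempty) :
    let μ := Measure.dirac ((0 : ℝ), j₀) + ∑ m ∈ Finset.range M, c • Measure.dirac (x m)
    ∑ m ∈ F, μ (dyadicRect j₀ m) =
      ENNReal.ofReal (F.card * (2 + j₀) / (1 + j₀ + F.card)) * μ (⋃ m ∈ F, dyadicRect j₀ m) := by
  intro μ
  have hx' : ∀ p < M, ∀ m, x p ∈ dyadicRect j₀ m ↔ p = m := fun p hp =>
    mem_dyadicRect_iff_of_mem_upperRight (hx p hp)
  have ht : 0 ≤ (1 + j₀)⁻¹ := by positivity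
  have hsum : ∑ m ∈ F, μ (dyadicRect j₀ m) = ENNReal.ofReal (F.card * (1 + (1 + j₀)⁻¹)) := by
    rw [Finset.sum_congr rfl fun m hm => dirac_add_sum_smul_dirac_apply
        (corner_mem_dyadicRect j₀) hx' (Finset.mem_range.1 (hF hm)),
      Finset.sum_const, nsmul_eq_mul, hc, ENNReal.ofReal_mul (Nat.cast_nonneg _),
      ENNReal.ofReal_add zero_le_one ht, ENNReal.ofReal_one, ENNReal.ofReal_natCast]
  have hunion : μ (⋃ m ∈ F, dyadicRect j₀ m) = ENNReal.ofReal (1 + F.card * (1 + j₀)⁻¹) := by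
    rw [dirac_add_sum_smul_dirac_apply_biUnion (corner_mem_dyadicRect j₀) hx' hF hFne, hc,
      ENNReal.ofReal_add zero_le_one (by positivity), ENNReal.ofReal_mul (Nat.cast_nonneg _),
      ENNReal.ofReal_one, ENNReal.ofReal_natCast]
  rw [hsum, hunion, ← ENNReal.ofReal_mul (by positivity), carleson_ratio_mul_eq _ hj₀]
theorem stmt16 (N : ℕ) (hN : 1 ≤ N) (Λ : ℕ) (hΛ : 2 ≤ Λ) :
    let j₀ : ℝ := (Λ : ℝ) - 2
    let R : ℕ → Set (ℝ × ℝ) := fun m =>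
      Set.Ico (0 : ℝ) (2 ^ m) ×ˢ Set.Ico j₀ (j₀ + (2 : ℝ) ^ (-(m : ℤ)))
    let Esel : ℕ → Set (ℝ × ℝ) := fun m =>
      Set.Ico ((2 : ℝ) ^ m / 2) (2 ^ m) ×ˢ
        Set.Ico (j₀ + (2 : ℝ) ^ (-(m : ℤ) - 1)) (j₀ + (2 : ℝ) ^ (-(m : ℤ)))
    (∀ (M : ℕ) (x : ℕ → ℝ × ℝ), (∀ m < M, x m ∈ Esel m) →
      let μ : Measure (ℝ × ℝ) :=
        Measure.dirac (0, j₀) +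
          ∑ m ∈ Finset.range M, ((Λ : ℝ≥0∞) - 1)⁻¹ • Measure.dirac (x m)
      (∀ F ⊆ Finset.range M, F.Nonempty →
        ∑ m ∈ F, μ (R m) =
          ENNReal.ofReal (((F.card : ℝ) * (2 + j₀)) / (1 + j₀ + (F.card : ℝ))) *
            μ (⋃ m ∈ F, R m)) ∧
      (∀ F ⊆ Finset.range M,
        ∑ m ∈ F, μ (R m) ≤ (Λ : ℝ≥0∞) * μ (⋃ m ∈ F, R m))) ∧
    (∃ M₀ : ℕ, ∀ M ≥ M₀, ∀ x : ℕ → ℝ × ℝ, (∀ m < M, x m ∈ Esel m) →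
      let μ : Measure (ℝ × ℝ) :=
        Measure.dirac (0, j₀) +
          ∑ m ∈ Finset.range M, ((Λ : ℝ≥0∞) - 1)⁻¹ • Measure.dirac (x m)
      ∀ f : ℕ → Fin N, ∃ i : Fin N, ∃ F ⊆ Finset.range M,
        F.Nonempty ∧ (∀ m ∈ F, f m = i) ∧
        ((Λ : ℝ≥0∞) / 2) * μ (⋃ m ∈ F, R m) ≤ ∑ m ∈ F, μ (R m)) := by
  intro j₀ R Esel
  have hj₀ : 0 ≤ j₀ := sub_nonneg.2 (by exact_mod_cast hΛ)
  have hΛ_eq : (Λ : ℝ≥0∞) = ENNReal.ofReal (2 + j₀) := by simp [j₀]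
  have hc : ((Λ : ℝ≥0∞) - 1)⁻¹ = ENNReal.ofReal (1 + j₀)⁻¹ := by
    rw [ENNReal.ofReal_inv_of_pos (by positivity), show 1 + j₀ = (Λ : ℝ) - 1 by ring,
      ENNReal.ofReal_sub _ zero_le_one, ENNReal.ofReal_natCast, ENNReal.ofReal_one]
  have hratio := fun M (x : ℕ → ℝ × ℝ) (hx : ∀ m < M, x m ∈ Esel m) F hF hFne =>
    sum_measure_dyadicRect_eq hj₀ hc hx (F := F) hF hFne
  refine ⟨fun M x hx => ⟨hratio M x hx, fun F hF => ?_⟩, ⟨N * (Λ - 1), fun M hM x hx f => ?_⟩⟩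
  · rcases F.eq_empty_or_nonempty with rfl | hFne
    · simp
    refine (hratio M x hx F hF hFne).trans_le (mul_le_mul_left ?_ _)
    rw [hΛ_eq]
    exact ENNReal.ofReal_le_ofReal (carleson_ratio_le _ hj₀)
  · obtain ⟨i, -, hi⟩ := Finset.exists_le_card_fiber_of_mul_le_card_of_maps_to
      (fun m _ => Finset.mem_univ (f m)) (Finset.univ_nonempty_iff.2 ⟨⟨0, hN⟩⟩)
      (by simpa using hM : Finset.univ.card * (Λ - 1) ≤ (Finset.range M).card)
    have hFne : (Finset.range M |>.filter (f · = i)).Nonempty :=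
      Finset.card_pos.1 (by omega)
    refine ⟨i, _, Finset.filter_subset _ _, hFne, fun m hm => (Finset.mem_filter.1 hm).2, ?_⟩
    refine (mul_le_mul_left ?_ _).trans_eq (hratio M x hx _ (Finset.filter_subset _ _) hFne).symm
    rw [hΛ_eq, ← ENNReal.ofReal_ofNat 2, ← ENNReal.ofReal_div_of_pos two_pos]
    refine ENNReal.ofReal_le_ofReal (half_le_carleson_ratio hj₀ ?_)
    have : ((Λ - 1 : ℕ) : ℝ) ≤ _ := Nat.cast_le.2 hi
    push_cast [j₀, Nat.cast_sub (by omega : 1 ≤ Λ)] at this ⊢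
    linarith
end

section
/- Let E be a finite collection of measurable sets with 0 < μ(sh(E)) < ∞ and suppose the restricted weak-type bound μ({M_E(1_B) > η}) ≤ M μ(B) holds for all measurable B, with η ∈ (0,1), M ≥ 1. Then there exists a total order ≺ on E such that for every R ∈ E, μ({x ∈ R : h_{E_{⪰R}}(x) ≤ 2M‖E‖_{Carleson(μ)}}) ≥ (1−η) μ(R), and consequently ‖E‖_{Sparse(μ)} ≥ (1−η)/(2M‖E‖_{Carleson(μ)}). -/
open MeasureTheory Set
open scoped ENNReal

/-!
For a subfamily `T` with `∑_T μ(E j) ≤ c μ(sh T)`, let `B` be the set where `h_T > 2Mc`. Markov's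
inequality gives `2Mc μ(B) ≤ ∑_T μ(E j) ≤ c μ(sh T)`. If every `E i` in `T` had more than an
`η`-fraction of its measure in `B`, the shadow of `T` would lie in `{M_E 1_B > η}`, whence
`μ(sh T) ≤ M μ(B) ≤ μ(sh T) / 2`, absurd. So some `E i` satisfies the selection property for `T`;
removing such elements one at a time, each placed below those that remain, produces the order.

For the sparse family take `φ i = (2Mc)⁻¹ 1_{G i}` with `G i = {x ∈ E i | h_{E_{⪰i}}(x) ≤ 2Mc}`: the
indices `i` with `x ∈ G i` all lie above the least one, `i₀`, and all contain `x`, so there are at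
most `h_{E_{⪰i₀}}(x) ≤ 2Mc` of them.
-/

theorem Finset.exists_linearOrder_of_exists_mem {ι : Type*} [DecidableEq ι]
    (P : ι → Finset ι → Prop) (T : Finset ι) (hP : ∀ U ⊆ T, U.Nonempty → ∃ i ∈ U, P i U) :
    ∃ _ : LinearOrder ι, ∀ i ∈ T, P i {j ∈ T | i ≤ j} := by
  induction T using Finset.strongInduction with
  | H T ih =>
    rcases T.eq_empty_or_nonempty with rfl | hT
    · exact ⟨IsWellOrder.linearOrder WellOrderingRel, by simp⟩
    obtain ⟨i₀, hi₀, hPi₀⟩ := hP T subset_rfl hT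
    obtain ⟨o, ho⟩ := ih (T.erase i₀) (T.erase_ssubset hi₀)
      fun U hU => hP U (hU.trans (T.erase_subset i₀))
    -- `i₀` below everything, the rest ordered by `o`
    let g : ι → WithBot ι := fun j => if j = i₀ then ⊥ else j
    have hg : g.Injective := by
      intro a b hab
      by_cases ha : a = i₀ <;> by_cases hb : b = i₀ <;> simp_all [g]
    refine ⟨LinearOrder.lift' g hg, fun i hi => ?_⟩
    by_cases hii₀ : i = i₀
    · subst hii₀
      convert hPi₀
      exact Finset.filter_true_of_mem fun j _ => show g i ≤ g j by simp [g]
    · convert ho i (Finset.mem_erase.2 ⟨hii₀, hi⟩) using 1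
      ext j
      simp only [Finset.mem_filter, Finset.mem_erase]
      show j ∈ T ∧ g i ≤ g j ↔ _
      by_cases hj : j = i₀ <;> simp [g, hii₀, hj]

section

variable {X ι : Type*} {E : ι → Set X}

theorem sum_indicator_setOf_sum_indicator_le [LinearOrder ι] (s : Finset ι) (a : ℝ≥0∞) (x : X) :
    ∑ i ∈ s, {y ∈ E i | ∑ j ∈ s with i ≤ j, (E j).indicator (1 : X → ℝ≥0∞) y ≤ a}.indicator 1 x
      ≤ a := by
  set G := fun i => {y ∈ E i | ∑ j ∈ s with i ≤ j, (E j).indicator (1 : X → ℝ≥0∞) y ≤ a}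
  classical
  set A := {i ∈ s | x ∈ G i}
  rcases A.eq_empty_or_nonempty with hA | hA
  · rw [Finset.sum_eq_zero fun i hi => indicator_of_notMem (Finset.filter_eq_empty_iff.1 hA hi) _]
    exact zero_le
  have hi₀ := Finset.mem_filter.1 (A.min'_mem hA)
  calc ∑ i ∈ s, (G i).indicator 1 x = ∑ i ∈ s with A.min' hA ≤ i, (G i).indicator 1 x :=
        (Finset.sum_filter_of_ne fun i hi hne =>
          A.min'_le i (Finset.mem_filter.2 ⟨hi, mem_of_indicator_ne_zero hne⟩)).symm
    _ ≤ ∑ i ∈ s with A.min' hA ≤ i, (E i).indicator 1 x :=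
        Finset.sum_le_sum fun i _ => indicator_le_indicator_of_subset (sep_subset _ _)
          (fun _ => zero_le) x
    _ ≤ a := hi₀.2.2

variable [MeasurableSpace X] {μ : Measure X}

theorem lt_measure_inter_div_of_measure_diff_lt {A B : Set X} {η : ℝ≥0∞} (hA : μ A ≠ ∞)
    (h : μ (A \ B) < (1 - η) * μ A) : η < μ (B ∩ A) / μ A := by
  have hpos : 0 < (1 - η) * μ A := (zero_le).trans_lt h
  have hη : η ≤ 1 := (tsub_pos_iff_lt.1 (ENNReal.mul_pos_iff.1 hpos).1).le
  rw [ENNReal.lt_div_iff_mul_lt (Or.inl (ENNReal.mul_pos_iff.1 hpos).2.ne') (Or.inl hA)]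
  have hfin : (1 - η) * μ A ≠ ∞ := ENNReal.mul_ne_top (by simp) hA
  refine (ENNReal.add_lt_add_iff_right hfin).1 ?_
  calc η * μ A + (1 - η) * μ A = μ A := by rw [← add_mul, add_tsub_cancel_of_le hη, one_mul]
    _ ≤ μ (A ∩ B) + μ (A \ B) := measure_le_inter_add_sdiff μ A B
    _ < μ (B ∩ A) + (1 - η) * μ A := by
      rw [inter_comm]
      exact ENNReal.add_lt_add_left (measure_ne_top_of_subset inter_subset_right hA) h

theorem measurable_sum_indicator_one {T : Finset ι} (hE : ∀ j ∈ T, MeasurableSet (E j)) :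
    Measurable fun x => ∑ j ∈ T, (E j).indicator (1 : X → ℝ≥0∞) x :=
  Finset.measurable_sum T fun j hj => measurable_one.indicator (hE j hj)

theorem mul_measure_lt_sum_indicator_one_le (T : Finset ι) (hE : ∀ j ∈ T, MeasurableSet (E j))
    (a : ℝ≥0∞) :
    a * μ {x | a < ∑ j ∈ T, (E j).indicator (1 : X → ℝ≥0∞) x} ≤ ∑ j ∈ T, μ (E j) :=
  calc a * μ {x | a < ∑ j ∈ T, (E j).indicator (1 : X → ℝ≥0∞) x}
      ≤ a * μ {x | a ≤ ∑ j ∈ T, (E j).indicator (1 : X → ℝ≥0∞) x} := by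
        gcongr with x
        exact le_of_lt
    _ ≤ ∫⁻ x, ∑ j ∈ T, (E j).indicator (1 : X → ℝ≥0∞) x ∂μ :=
        mul_meas_ge_le_lintegral₀ (measurable_sum_indicator_one hE).aemeasurable a
    _ = ∑ j ∈ T, μ (E j) := by
      rw [lintegral_finsetSum T fun j hj => measurable_one.indicator (hE j hj)]
      exact Finset.sum_congr rfl fun j hj => lintegral_indicator_one (hE j hj)

theorem sum_measure_le_iSup_mul_measure_biUnion {s T : Finset ι} (hTs : T ⊆ s)
    (hfin : ∀ j ∈ T, μ (E j) ≠ ∞) :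
    ∑ j ∈ T, μ (E j) ≤
      (⨆ F ∈ s.powerset, (∑ i ∈ F, μ (E i)) / μ (⋃ i ∈ F, E i)) * μ (⋃ j ∈ T, E j) := by
  by_cases hU : μ (⋃ j ∈ T, E j) = 0
  · rw [Finset.sum_eq_zero fun j hj => measure_mono_null (subset_biUnion_of_mem hj) hU]
    exact zero_le
  have hUfin : μ (⋃ j ∈ T, E j) ≠ ∞ :=
    (measure_biUnion_lt_top T.finite_toSet fun j hj => (hfin j hj).lt_top).ne
  calc ∑ j ∈ T, μ (E j) = (∑ j ∈ T, μ (E j)) / μ (⋃ j ∈ T, E j) * μ (⋃ j ∈ T, E j) :=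
        (ENNReal.div_mul_cancel hU hUfin).symm
    _ ≤ _ := by
      gcongr
      exact le_iSup₂_of_le (f := fun F _ => (∑ i ∈ F, μ (E i)) / μ (⋃ i ∈ F, E i)) T
        (Finset.mem_powerset.2 hTs) le_rfl

theorem exists_mem_mul_measure_le_measure_sum_indicator_le {s T : Finset ι} {η M c : ℝ≥0∞}
    (hTs : T ⊆ s) (hT : T.Nonempty) (hE : ∀ j ∈ T, MeasurableSet (E j))
    (hfin : ∀ j ∈ T, μ (E j) ≠ ∞)
    (hmax : ∀ B : Set X, MeasurableSet B →
      μ {x | η < ⨆ i ∈ s, (E i).indicator (fun _ => μ (B ∩ E i) / μ (E i)) x} ≤ M * μ B)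
    (hcar : ∑ j ∈ T, μ (E j) ≤ c * μ (⋃ j ∈ T, E j)) :
    ∃ i ∈ T, (1 - η) * μ (E i) ≤
      μ {x ∈ E i | ∑ j ∈ T, (E j).indicator (1 : X → ℝ≥0∞) x ≤ 2 * M * c} := by
  by_contra! hsmall
  set B := {x | 2 * M * c < ∑ j ∈ T, (E j).indicator (1 : X → ℝ≥0∞) x}
  have hB : MeasurableSet B := measurableSet_lt measurable_const (measurable_sum_indicator_one hE)
  have hdense (i : ι) (hi : i ∈ T) : η < μ (B ∩ E i) / μ (E i) := by
    refine lt_measure_inter_div_of_measure_diff_lt (hfin i hi) ?_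
    convert hsmall i hi using 2
    ext x
    simp [B]
  have hU : μ (⋃ j ∈ T, E j) ≤ M * μ B := by
    refine (measure_mono fun x hx => ?_).trans (hmax B hB)
    obtain ⟨i, hi, hxi⟩ := mem_iUnion₂.1 hx
    refine (hdense i hi).trans_le (le_iSup₂_of_le i (hTs hi) ?_)
    rw [indicator_of_mem hxi]
  set S := ∑ j ∈ T, μ (E j)
  obtain ⟨i, hi⟩ := hT
  have hS0 : S ≠ 0 := fun h0 => by simpa [Finset.sum_eq_zero_iff.1 h0 i hi] using hsmall i hi
  have hSfin : S ≠ ∞ := ENNReal.sum_ne_top.2 hfin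
  have h2S : 2 * S ≤ 1 * S :=
    calc 2 * S ≤ 2 * (c * (M * μ B)) := by gcongr; exact hcar.trans (by gcongr)
      _ = 2 * M * c * μ B := by ring
      _ ≤ 1 * S := by rw [one_mul]; exact mul_measure_lt_sum_indicator_one_le T hE _
  exact absurd ((ENNReal.mul_le_mul_iff_left hS0 hSfin).1 h2S) (by norm_num)

theorem exists_sparse_of_mul_measure_le [LinearOrder ι] (s : Finset ι)
    (hE : ∀ i ∈ s, MeasurableSet (E i)) (a c : ℝ≥0∞)
    (h : ∀ i ∈ s, c * μ (E i) ≤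
      μ {x ∈ E i | ∑ j ∈ s with i ≤ j, (E j).indicator (1 : X → ℝ≥0∞) x ≤ a}) :
    ∃ φ : ι → X → ℝ≥0∞, (∀ i ∈ s, Measurable (φ i)) ∧
      (∀ i ∈ s, c / a * μ (E i) ≤ ∫⁻ x in E i, φ i x ∂μ) ∧ (∀ x, ∑ i ∈ s, φ i x ≤ 1) := by
  set G := fun i => {y ∈ E i | ∑ j ∈ s with i ≤ j, (E j).indicator (1 : X → ℝ≥0∞) y ≤ a}
  have hG (i : ι) (hi : i ∈ s) : MeasurableSet (G i) :=
    (hE i hi).inter (measurableSet_le (measurable_sum_indicator_one fun j hj =>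
      hE j (Finset.mem_filter.1 hj).1) measurable_const)
  refine ⟨fun i x => a⁻¹ * (G i).indicator 1 x, fun i hi => ?_, fun i hi => ?_, fun x => ?_⟩
  · exact measurable_const.mul (measurable_one.indicator (hG i hi))
  · calc c / a * μ (E i) = a⁻¹ * (c * μ (E i)) := by rw [ENNReal.div_eq_inv_mul, mul_assoc]
      _ ≤ a⁻¹ * μ (G i) := by gcongr; exact h i hi
      _ = ∫⁻ x in E i, a⁻¹ * (G i).indicator 1 x ∂μ := by
        rw [lintegral_const_mul _ (measurable_one.indicator (hG i hi)),
          lintegral_indicator_one (hG i hi), Measure.restrict_apply (hG i hi),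
          inter_eq_left.2 (sep_subset _ _)]
  · calc ∑ i ∈ s, a⁻¹ * (G i).indicator 1 x = a⁻¹ * ∑ i ∈ s, (G i).indicator 1 x :=
          (Finset.mul_sum ..).symm
      _ ≤ a⁻¹ * a := by gcongr; exact sum_indicator_setOf_sum_indicator_le s a x
      _ ≤ 1 := ENNReal.inv_mul_le_one a

end

open scoped Classical

theorem stmt17_general {X : Type*} [MeasurableSpace X] (μ : Measure X)
    {ι : Type*} (s : Finset ι) (E : ι → Set X)
    (hmeas : ∀ i ∈ s, MeasurableSet (E i))
    (hfin : ∀ i ∈ s, μ (E i) < ⊤)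
    (η M : ℝ≥0∞)
    (hmax : ∀ B : Set X, MeasurableSet B →
      μ {x | η < ⨆ i ∈ s, (E i).indicator (fun _ => μ (B ∩ E i) / μ (E i)) x} ≤ M * μ B) :
    let Car : ℝ≥0∞ := ⨆ F ∈ s.powerset, (∑ i ∈ F, μ (E i)) / μ (⋃ i ∈ F, E i)
    (∃ r : ι → ι → Prop, IsLinearOrder ι r ∧
      ∀ i ∈ s, (1 - η) * μ (E i) ≤
        μ {x ∈ E i |
            (∑ j ∈ s.filter (fun j => r i j), (E j).indicator (1 : X → ℝ≥0∞) x) ≤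
              2 * M * Car}) ∧
    (∃ φ : ι → X → ℝ≥0∞,
      (∀ i ∈ s, Measurable (φ i)) ∧
      (∀ i ∈ s, ((1 - η) / (2 * M * Car)) * μ (E i) ≤ ∫⁻ x in E i, φ i x ∂μ) ∧
      (∀ x, ∑ i ∈ s, φ i x ≤ 1)) := by
  intro Car
  obtain ⟨_, hsel⟩ := Finset.exists_linearOrder_of_exists_mem
    (fun i U => (1 - η) * μ (E i) ≤
      μ {x ∈ E i | ∑ j ∈ U, (E j).indicator (1 : X → ℝ≥0∞) x ≤ 2 * M * Car}) s
    fun U hUs hU => exists_mem_mul_measure_le_measure_sum_indicator_le hUs hU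
      (fun j hj => hmeas j (hUs hj)) (fun j hj => (hfin j (hUs hj)).ne) hmax
      (sum_measure_le_iSup_mul_measure_biUnion hUs fun j hj => (hfin j (hUs hj)).ne)
  refine ⟨⟨(· ≤ ·), inferInstance, fun i hi => ?_⟩,
    exists_sparse_of_mul_measure_le s hmeas _ _ hsel⟩
  simpa only [Finset.filter_congr_decidable] using hsel i hi

theorem stmt17 {X : Type*} [MeasurableSpace X] (μ : Measure X)
    {ι : Type*} (s : Finset ι) (E : ι → Set X)
    (hmeas : ∀ i ∈ s, MeasurableSet (E i))
    (hpos : ∀ i ∈ s, 0 < μ (E i)) (hfin : ∀ i ∈ s, μ (E i) < ⊤)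
    (hshpos : 0 < μ (⋃ i ∈ s, E i)) (hshfin : μ (⋃ i ∈ s, E i) < ⊤)
    (η M : ℝ≥0∞) (hη0 : 0 < η) (hη1 : η < 1) (hM1 : 1 ≤ M) (hMfin : M < ⊤)
    (hmax : ∀ B : Set X, MeasurableSet B →
      μ {x | η < ⨆ i ∈ s, (E i).indicator (fun _ => μ (B ∩ E i) / μ (E i)) x} ≤ M * μ B) :
    let Car : ℝ≥0∞ := ⨆ F ∈ s.powerset, (∑ i ∈ F, μ (E i)) / μ (⋃ i ∈ F, E i)
    (∃ r : ι → ι → Prop, IsLinearOrder ι r ∧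
      ∀ i ∈ s, (1 - η) * μ (E i) ≤
        μ {x ∈ E i |
            (∑ j ∈ s.filter (fun j => r i j), (E j).indicator (1 : X → ℝ≥0∞) x) ≤
              2 * M * Car}) ∧
    (∃ φ : ι → X → ℝ≥0∞,
      (∀ i ∈ s, Measurable (φ i)) ∧
      (∀ i ∈ s, ((1 - η) / (2 * M * Car)) * μ (E i) ≤ ∫⁻ x in E i, φ i x ∂μ) ∧
      (∀ x, ∑ i ∈ s, φ i x ≤ 1)) :=
  stmt17_general μ s E hmeas hfin η M hmax
end
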